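/- arXiv:2309.00365 — 4 statements merged into one kernel-verified Lean document; each statement's English description precedes it below -/
import Mathlib

section
/- For every pattern η ∈ S₃, the number of permutations in Sₙ avoiding η equals the n-th Catalan number Cₙ = (1/(n+1))·C(2n,n). -/
open Equiv Filter Real Set

def Contains {n m : ℕ} (σ : Equiv.Perm (Fin n)) (η : Equiv.Perm (Fin m)) : Prop :=
  ∃ f : Fin m → Fin n, StrictMono f ∧ ∀ j k, σ (f j) < σ (f k) ↔ η j < η k

def Avoids {n m : ℕ} (σ : Equiv.Perm (Fin n)) (η : Equiv.Perm (Fin m)) : Prop := ¬ Contains σ η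

def Avoids231 {n : ℕ} (σ : Equiv.Perm (Fin n)) : Prop :=
  ¬ ∃ i₁ i₂ i₃ : Fin n, i₁ < i₂ ∧ i₂ < i₃ ∧ σ i₃ < σ i₁ ∧ σ i₁ < σ i₂

def Avoids132 {n : ℕ} (σ : Equiv.Perm (Fin n)) : Prop :=
  ¬ ∃ i₁ i₂ i₃ : Fin n, i₁ < i₂ ∧ i₂ < i₃ ∧ σ i₁ < σ i₃ ∧ σ i₃ < σ i₂

def Avoids213 {n : ℕ} (σ : Equiv.Perm (Fin n)) : Prop :=
  ¬ ∃ i₁ i₂ i₃ : Fin n, i₁ < i₂ ∧ i₂ < i₃ ∧ σ i₂ < σ i₁ ∧ σ i₁ < σ i₃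

def Avoids312 {n : ℕ} (σ : Equiv.Perm (Fin n)) : Prop :=
  ¬ ∃ i₁ i₂ i₃ : Fin n, i₁ < i₂ ∧ i₂ < i₃ ∧ σ i₂ < σ i₃ ∧ σ i₃ < σ i₁

/-- `f` indexes an alternating subsequence of `σ`. -/
def IsAltSub {n k : ℕ} (σ : Equiv.Perm (Fin n)) (f : Fin k → Fin n) : Prop :=
  StrictMono f ∧ ∀ (j : ℕ) (h : j + 2 < k),
    (σ (f ⟨j, by omega⟩) < σ (f ⟨j + 1, by omega⟩) ↔
      ¬ σ (f ⟨j + 1, by omega⟩) < σ (f ⟨j + 2, by omega⟩))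

/-- The length of the longest alternating subsequence. -/
noncomputable def altLen {n : ℕ} (σ : Equiv.Perm (Fin n)) : ℕ :=
  sSup {k | ∃ f : Fin k → Fin n, IsAltSub σ f}

/-- `f` indexes an alternating subsequence beginning with an ascent and ending with a descent. -/
def IsAltPM {n k : ℕ} (σ : Equiv.Perm (Fin n)) (f : Fin k → Fin n) : Prop :=
  IsAltSub σ f ∧ 3 ≤ k ∧ Odd k ∧
    (∀ (h : 3 ≤ k), σ (f ⟨0, by omega⟩) < σ (f ⟨1, by omega⟩)) ∧
    (∀ (h : 3 ≤ k), σ (f ⟨k - 1, by omega⟩) < σ (f ⟨k - 2, by omega⟩))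

/-- The length `A^{+,-}` of the longest alternating subsequence beginning with an ascent and
ending with a descent; `1` if there is no such subsequence, and `0` when `n = 0`. -/
noncomputable def apm {n : ℕ} (σ : Equiv.Perm (Fin n)) : ℕ :=
  if n = 0 then 0 else max (sSup {k | ∃ f : Fin k → Fin n, IsAltPM σ f}) 1

/-- The length of the longest increasing subsequence. -/
noncomputable def lisLen {n : ℕ} (σ : Equiv.Perm (Fin n)) : ℕ :=
  sSup {k | ∃ f : Fin k → Fin n, StrictMono f ∧ StrictMono (⇑σ ∘ f)}

open scoped Classical in
/-- The moment generating function of `A_n` under the uniform 231-avoiding measure. -/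
noncomputable def Malt (n : ℕ) (lam : ℝ) : ℝ :=
  (∑ σ ∈ Finset.univ.filter (fun σ : Equiv.Perm (Fin n) => Avoids231 σ),
    Real.exp (lam * altLen σ)) / (catalan n)

open scoped Classical in
noncomputable def Mapm (n : ℕ) (lam : ℝ) : ℝ :=
  (∑ σ ∈ Finset.univ.filter (fun σ : Equiv.Perm (Fin n) => Avoids231 σ),
    Real.exp (lam * apm σ)) / (catalan n)

open scoped Classical in
noncomputable def Minc (n : ℕ) (lam : ℝ) : ℝ :=
  (∑ σ ∈ Finset.univ.filter (fun σ : Equiv.Perm (Fin n) => Avoids231 σ),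
    Real.exp (lam * lisLen σ)) / (catalan n)

/-!
Reversal `σ ↦ σ * rev`, complement `σ ↦ rev * σ` and inversion act on a permutation and its
patterns simultaneously, and they split `S₃` into the orbits `{123, 321}` and
`{132, 213, 231, 312}`; so it suffices to count the 231- and the 123-avoiders.

A 231-avoider of length `n + 1` whose maximum sits at position `k` is a 231-avoider of the
values `< k`, then `n`, then a 231-avoider of the values `k, …, n - 1`; this gives Catalan's
recursion `C (n + 1) = ∑ k, C k * C (n - k)`.

Simion–Schmidt: both a 132-avoider and a 123-avoider are determined by their left-to-right
minima (positions and values), and every permutation has the left-to-right minima of some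
132-avoider and of some 123-avoider. For the latter, among the permutations with the given
minima take one maximising (resp. minimising) `∑ i * σ i`: an occurrence `a < b < c` of 132
(resp. 123) lets one swap the values at `b` and `c` without changing the minima, increasing
(resp. decreasing) that sum.
-/

open Function

def Avoids123 {n : ℕ} (σ : Equiv.Perm (Fin n)) : Prop :=
  ¬ ∃ i₁ i₂ i₃ : Fin n, i₁ < i₂ ∧ i₂ < i₃ ∧ σ i₁ < σ i₂ ∧ σ i₂ < σ i₃

section Patterns

variable {n m : ℕ}

theorem contains_iff_strictMono (σ : Perm (Fin n)) (η : Perm (Fin m)) :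
    Contains σ η ↔ ∃ f : Fin m → Fin n, StrictMono f ∧ StrictMono (σ ∘ f ∘ η.symm) := by
  refine exists_congr fun f => and_congr_right fun _ => ⟨fun h j k hjk => ?_, fun h j k => ?_⟩
  · simpa [h] using hjk
  · simpa using h.lt_iff_lt (a := η j) (b := η k)

theorem contains_three_iff (σ : Perm (Fin n)) (η : Perm (Fin 3)) :
    Contains σ η ↔ ∃ a b c : Fin n, a < b ∧ b < c ∧
      σ (![a, b, c] (η.symm 0)) < σ (![a, b, c] (η.symm 1)) ∧
      σ (![a, b, c] (η.symm 1)) < σ (![a, b, c] (η.symm 2)) := by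
  simp only [contains_iff_strictMono, Fin.strictMono_iff_lt_succ, Fin.forall_fin_two]
  constructor
  · rintro ⟨f, hf, hσ⟩
    refine ⟨f 0, f 1, f 2, hf.1, hf.2, ?_⟩
    rwa [show ![f 0, f 1, f 2] = f from funext fun i => by fin_cases i <;> rfl]
  · rintro ⟨a, b, c, hab, hbc, hσ⟩
    exact ⟨![a, b, c], ⟨hab, hbc⟩, hσ⟩

theorem avoids_one_iff (σ : Perm (Fin n)) : Avoids σ (1 : Perm (Fin 3)) ↔ Avoids123 σ :=
  not_congr (contains_three_iff σ 1)

theorem avoids_finRotate_iff (σ : Perm (Fin n)) : Avoids σ (finRotate 3) ↔ Avoids231 σ :=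
  not_congr (contains_three_iff σ _)

theorem avoids_finRotate_mul_revPerm_iff (σ : Perm (Fin n)) :
    Avoids σ (finRotate 3 * Fin.revPerm) ↔ Avoids132 σ :=
  not_congr (contains_three_iff σ _)

end Patterns

section Symmetries

variable {n m : ℕ}

theorem Contains.mul_revPerm {σ : Perm (Fin n)} {η : Perm (Fin m)} (h : Contains σ η) :
    Contains (σ * Fin.revPerm) (η * Fin.revPerm) := by
  obtain ⟨f, hf, hσ⟩ := h
  exact ⟨Fin.rev ∘ f ∘ Fin.rev, fun j k hjk => Fin.rev_lt_rev.mpr (hf (Fin.rev_lt_rev.mpr hjk)),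
    fun j k => by simpa using hσ j.rev k.rev⟩

theorem Contains.revPerm_mul {σ : Perm (Fin n)} {η : Perm (Fin m)} (h : Contains σ η) :
    Contains (Fin.revPerm * σ) (Fin.revPerm * η) := by
  obtain ⟨f, hf, hσ⟩ := h
  exact ⟨f, hf, fun j k => by simpa [Fin.rev_lt_rev] using hσ k j⟩

theorem Contains.inv {σ : Perm (Fin n)} {η : Perm (Fin m)} (h : Contains σ η) :
    Contains σ⁻¹ η⁻¹ := by
  obtain ⟨f, hf, hσ⟩ := h
  exact ⟨σ ∘ f ∘ ⇑η⁻¹, fun j k hjk => by simpa [hσ] using hjk,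
    fun j k => by simpa using hf.lt_iff_lt⟩

theorem ncard_avoids_eq_of_involutive {e : Perm (Fin n) → Perm (Fin n)}
    {ψ : Perm (Fin m) → Perm (Fin m)} (he : Involutive e) (hψ : Involutive ψ)
    (h : ∀ σ η, Contains σ η → Contains (e σ) (ψ η)) (η : Perm (Fin m)) :
    {σ : Perm (Fin n) | Avoids σ (ψ η)}.ncard = {σ : Perm (Fin n) | Avoids σ η}.ncard := by
  have hset : {σ | Avoids σ (ψ η)} = e '' {σ | Avoids σ η} := by
    rw [he.image_eq_preimage_symm]
    ext σ
    refine not_congr ⟨fun hc => ?_, fun hc => ?_⟩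
    · simpa only [hψ η] using h _ _ hc
    · simpa only [he σ] using h _ _ hc
  rw [hset, ncard_image_of_injective _ he.injective]

theorem ncard_avoids_mul_revPerm (η : Perm (Fin m)) :
    {σ : Perm (Fin n) | Avoids σ (η * Fin.revPerm)}.ncard =
      {σ : Perm (Fin n) | Avoids σ η}.ncard :=
  ncard_avoids_eq_of_involutive (fun σ => Equiv.ext fun i => by simp)
    (fun η => Equiv.ext fun i => by simp) (fun _ _ => Contains.mul_revPerm) η

theorem ncard_avoids_revPerm_mul (η : Perm (Fin m)) :
    {σ : Perm (Fin n) | Avoids σ (Fin.revPerm * η)}.ncard =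
      {σ : Perm (Fin n) | Avoids σ η}.ncard :=
  ncard_avoids_eq_of_involutive (fun σ => Equiv.ext fun i => by simp)
    (fun η => Equiv.ext fun i => by simp) (fun _ _ => Contains.revPerm_mul) η

theorem ncard_avoids_inv (η : Perm (Fin m)) :
    {σ : Perm (Fin n) | Avoids σ η⁻¹}.ncard = {σ : Perm (Fin n) | Avoids σ η}.ncard :=
  ncard_avoids_eq_of_involutive inv_involutive inv_involutive (fun _ _ => Contains.inv) η

end Symmetries

section RestrictPerm

variable {N m : ℕ}

def offsetEmb (d : ℕ) (h : d + m ≤ N) : Fin m ↪o Fin N :=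
  OrderEmbedding.ofStrictMono (fun i => ⟨d + i, by omega⟩) fun _ _ hij =>
    Fin.mk_lt_mk.mpr (Nat.add_lt_add_left hij d)

@[simp]
theorem val_offsetEmb (d : ℕ) (h : d + m ≤ N) (i : Fin m) : (offsetEmb d h i : ℕ) = d + i := rfl

theorem mem_range_offsetEmb {d : ℕ} {h : d + m ≤ N} {j : Fin N} :
    j ∈ range (offsetEmb d h) ↔ d ≤ j ∧ (j : ℕ) < d + m := by
  refine ⟨?_, fun hj => ⟨⟨j - d, by omega⟩, Fin.ext (by rw [val_offsetEmb, Fin.val_mk]; omega)⟩⟩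
  rintro ⟨i, rfl⟩
  simp

noncomputable def restrictPerm (σ : Perm (Fin N)) (e e' : Fin m ↪o Fin N)
    (h : ∀ i, σ (e i) ∈ range e') : Perm (Fin m) :=
  Equiv.ofBijective (fun i => (h i).choose) <| Finite.injective_iff_bijective.mp fun i j hij =>
    e.injective <| σ.injective <| by rw [← (h i).choose_spec, ← (h j).choose_spec, hij]

variable {σ : Perm (Fin N)} {e e' : Fin m ↪o Fin N} {h : ∀ i, σ (e i) ∈ range e'}

theorem restrictPerm_spec (i : Fin m) : e' (restrictPerm σ e e' h i) = σ (e i) :=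
  (h i).choose_spec

theorem restrictPerm_eq {τ : Perm (Fin m)} (hτ : ∀ i, σ (e i) = e' (τ i)) :
    restrictPerm σ e e' h = τ :=
  Equiv.ext fun i => e'.injective <| by rw [restrictPerm_spec, hτ]

theorem Avoids231.restrictPerm (hσ : Avoids231 σ) : Avoids231 (restrictPerm σ e e' h) := by
  rintro ⟨a, b, c, hab, hbc, h₁, h₂⟩
  rw [← e'.lt_iff_lt, restrictPerm_spec, restrictPerm_spec] at h₁ h₂
  exact hσ ⟨e a, e b, e c, e.lt_iff_lt.mpr hab, e.lt_iff_lt.mpr hbc, h₁, h₂⟩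

theorem Avoids231.not_pattern_of_mem_range {τ : Perm (Fin m)} (hτ : Avoids231 τ)
    (hστ : ∀ i, σ (e i) = e' (τ i)) {a b c : Fin N} (ha : a ∈ range e) (hb : b ∈ range e)
    (hc : c ∈ range e) (hab : a < b) (hbc : b < c) (h₁ : σ c < σ a) (h₂ : σ a < σ b) :
    False := by
  obtain ⟨a, rfl⟩ := ha
  obtain ⟨b, rfl⟩ := hb
  obtain ⟨c, rfl⟩ := hc
  rw [hστ, hστ, e'.lt_iff_lt] at h₁ h₂
  exact hτ ⟨a, b, c, e.lt_iff_lt.mp hab, e.lt_iff_lt.mp hbc, h₁, h₂⟩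

end RestrictPerm

section Join

variable {n : ℕ} (k : Fin (n + 1))

def lowerEmb : Fin k ↪o Fin (n + 1) := offsetEmb 0 (by omega)

def upperEmb : Fin (n - k) ↪o Fin (n + 1) := offsetEmb (k + 1) (by omega)

def upperValEmb : Fin (n - k) ↪o Fin (n + 1) := offsetEmb k (by omega)

theorem mem_range_lowerEmb_or_eq_or_mem_range_upperEmb (j : Fin (n + 1)) :
    j ∈ range (lowerEmb k) ∨ j = k ∨ j ∈ range (upperEmb k) := by
  simp only [lowerEmb, upperEmb, mem_range_offsetEmb, Fin.ext_iff]
  omega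

theorem mem_range_lowerEmb_or_eq_last_or_mem_range_upperValEmb (v : Fin (n + 1)) :
    v ∈ range (lowerEmb k) ∨ v = Fin.last n ∨ v ∈ range (upperValEmb k) := by
  simp only [lowerEmb, upperValEmb, mem_range_offsetEmb, Fin.ext_iff, Fin.val_last]
  omega

def joinFun (τ : Perm (Fin k)) (ρ : Perm (Fin (n - k))) (j : Fin (n + 1)) : Fin (n + 1) :=
  if h : (j : ℕ) < k then lowerEmb k (τ ⟨j, h⟩)
  else if h' : (j : ℕ) = k then Fin.last n
  else upperValEmb k (ρ ⟨j - (k + 1), by omega⟩)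

variable {k} {τ : Perm (Fin k)} {ρ : Perm (Fin (n - k))}

theorem joinFun_lowerEmb (i : Fin k) : joinFun k τ ρ (lowerEmb k i) = lowerEmb k (τ i) := by
  simp [joinFun, lowerEmb]

theorem joinFun_self : joinFun k τ ρ k = Fin.last n := by
  simp [joinFun]

theorem joinFun_upperEmb (i : Fin (n - k)) :
    joinFun k τ ρ (upperEmb k i) = upperValEmb k (ρ i) := by
  have h₁ : ¬ (k : ℕ) + 1 + i < k := by omega
  have h₂ : (k : ℕ) + 1 + i ≠ k := by omega
  simp [joinFun, upperEmb, h₁, h₂]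

theorem joinFun_surjective : Surjective (joinFun k τ ρ) := by
  intro v
  rcases mem_range_lowerEmb_or_eq_last_or_mem_range_upperValEmb k v with
    ⟨i, rfl⟩ | rfl | ⟨i, rfl⟩
  · exact ⟨lowerEmb k (τ.symm i), by rw [joinFun_lowerEmb, apply_symm_apply]⟩
  · exact ⟨k, joinFun_self⟩
  · exact ⟨upperEmb k (ρ.symm i), by rw [joinFun_upperEmb, apply_symm_apply]⟩

variable (k τ ρ) in
noncomputable def join : Perm (Fin (n + 1)) :=
  Equiv.ofBijective (joinFun k τ ρ) (Finite.surjective_iff_bijective.mp joinFun_surjective)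

theorem join_lowerEmb (i : Fin k) : join k τ ρ (lowerEmb k i) = lowerEmb k (τ i) :=
  joinFun_lowerEmb i

theorem join_self : join k τ ρ k = Fin.last n :=
  joinFun_self

theorem join_upperEmb (i : Fin (n - k)) : join k τ ρ (upperEmb k i) = upperValEmb k (ρ i) :=
  joinFun_upperEmb i

theorem Avoids231.join (hτ : Avoids231 τ) (hρ : Avoids231 ρ) : Avoids231 (join k τ ρ) := by
  rintro ⟨a, b, c, hab, hbc, h₁, h₂⟩
  rcases mem_range_lowerEmb_or_eq_or_mem_range_upperEmb k c with hc | rfl | hc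
  · have hc' := mem_range_offsetEmb.mp hc
    have mem : ∀ j : Fin (n + 1), j < c → j ∈ range (lowerEmb k) := fun j hj =>
      mem_range_offsetEmb.mpr ⟨Nat.zero_le _, by rw [Fin.lt_def] at hj; omega⟩
    exact hτ.not_pattern_of_mem_range (fun _ => join_lowerEmb _) (mem a (hab.trans hbc))
      (mem b hbc) hc hab hbc h₁ h₂
  · exact not_lt.mpr (Fin.le_last _) (by rwa [join_self] at h₁)
  · rcases mem_range_lowerEmb_or_eq_or_mem_range_upperEmb k a with ⟨a, rfl⟩ | rfl | ha
    · obtain ⟨c, rfl⟩ := hc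
      rw [join_lowerEmb, join_upperEmb, Fin.lt_def, lowerEmb, upperValEmb, val_offsetEmb,
        val_offsetEmb] at h₁
      omega
    · exact not_lt.mpr (Fin.le_last _) (by rwa [join_self] at h₂)
    · have ha' := mem_range_offsetEmb.mp ha
      have hc' := mem_range_offsetEmb.mp hc
      rw [Fin.lt_def] at hab hbc
      have hb : b ∈ range (upperEmb k) := mem_range_offsetEmb.mpr ⟨by omega, by omega⟩
      exact hρ.not_pattern_of_mem_range (fun _ => join_upperEmb _) ha hb hc hab hbc h₁ h₂

end Join

section Counting

variable {N : ℕ} {α : Type*} {f : α → Fin N} {s : Finset α} {v : Fin N}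

theorem card_le_of_forall_apply_lt (hf : Injective f) (h : ∀ y ∈ s, f y < v) :
    s.card ≤ v := by
  have hsub : s.image f ⊆ Finset.Iio v := fun w hw => by
    obtain ⟨y, hy, rfl⟩ := Finset.mem_image.mp hw
    exact Finset.mem_Iio.mpr (h y hy)
  simpa [Finset.card_image_of_injective _ hf] using Finset.card_le_card hsub

theorem card_add_lt_of_forall_lt_apply (hf : Injective f) (h : ∀ y ∈ s, v < f y) :
    s.card + v < N := by
  have hsub : s.image f ⊆ Finset.Ioi v := fun w hw => by
    obtain ⟨y, hy, rfl⟩ := Finset.mem_image.mp hw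
    exact Finset.mem_Ioi.mpr (h y hy)
  have := Finset.card_le_card hsub
  rw [Finset.card_image_of_injective _ hf, Fin.card_Ioi] at this
  omega

end Counting

section Catalan

variable {n : ℕ} {k : Fin (n + 1)} {σ : Perm (Fin (n + 1))}

theorem Avoids231.apply_lt_apply_of_lt_of_lt (hσ : Avoids231 σ) (hk : σ k = Fin.last n)
    {i j : Fin (n + 1)} (hi : i < k) (hj : k < j) : σ i < σ j := by
  refine lt_of_not_ge fun hji => hσ ⟨i, k, j, hi, hj, ?_, ?_⟩
  · exact hji.lt_of_ne (σ.injective.ne (hi.trans hj).ne')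
  · exact hk ▸ (Fin.le_last _).lt_of_ne (hk ▸ σ.injective.ne hi.ne)

theorem Avoids231.mem_range_lowerEmb (hσ : Avoids231 σ) (hk : σ k = Fin.last n) (i : Fin k) :
    σ (lowerEmb k i) ∈ range (lowerEmb k) := by
  have hi : lowerEmb k i < k := by simp [Fin.lt_def, lowerEmb]
  have hcard := card_add_lt_of_forall_lt_apply σ.injective (s := Finset.Ici k)
    (v := σ (lowerEmb k i)) fun j hj => by
      rcases (Finset.mem_Ici.mp hj).eq_or_lt with rfl | hj
      · exact hk ▸ (Fin.le_last _).lt_of_ne (hk ▸ σ.injective.ne hi.ne)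
      · exact hσ.apply_lt_apply_of_lt_of_lt hk hi hj
  rw [Fin.card_Ici] at hcard
  exact mem_range_offsetEmb.mpr ⟨Nat.zero_le _, by omega⟩

theorem Avoids231.mem_range_upperValEmb (hσ : Avoids231 σ) (hk : σ k = Fin.last n)
    (i : Fin (n - k)) : σ (upperEmb k i) ∈ range (upperValEmb k) := by
  have hi : k < upperEmb k i := by
    rw [Fin.lt_def, upperEmb, val_offsetEmb]
    omega
  have hcard := card_le_of_forall_apply_lt σ.injective (s := Finset.Iio k)
    (v := σ (upperEmb k i)) fun j hj =>
      hσ.apply_lt_apply_of_lt_of_lt hk (Finset.mem_Iio.mp hj) hi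
  have hlast : σ (upperEmb k i) ≠ Fin.last n := hk ▸ σ.injective.ne hi.ne'
  rw [Fin.card_Iio] at hcard
  rw [Ne, Fin.ext_iff, Fin.val_last] at hlast
  exact mem_range_offsetEmb.mpr ⟨hcard, by omega⟩

theorem join_restrictPerm (hk : σ k = Fin.last n)
    (hl : ∀ i, σ (lowerEmb k i) ∈ range (lowerEmb k))
    (hu : ∀ i, σ (upperEmb k i) ∈ range (upperValEmb k)) :
    join k (restrictPerm σ _ _ hl) (restrictPerm σ _ _ hu) = σ := by
  ext1 j
  rcases mem_range_lowerEmb_or_eq_or_mem_range_upperEmb k j with ⟨i, rfl⟩ | rfl | ⟨i, rfl⟩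
  · rw [join_lowerEmb, restrictPerm_spec]
  · rw [join_self, hk]
  · rw [join_upperEmb, restrictPerm_spec]

variable (k) in
noncomputable def avoids231FiberEquiv :
    {σ : Perm (Fin (n + 1)) // Avoids231 σ ∧ σ k = Fin.last n} ≃
      {τ : Perm (Fin k) // Avoids231 τ} × {ρ : Perm (Fin (n - k)) // Avoids231 ρ} where
  toFun σ :=
    (⟨restrictPerm σ.1 _ _ (σ.2.1.mem_range_lowerEmb σ.2.2), σ.2.1.restrictPerm⟩,
      ⟨restrictPerm σ.1 _ _ (σ.2.1.mem_range_upperValEmb σ.2.2), σ.2.1.restrictPerm⟩)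
  invFun p := ⟨join k p.1 p.2, p.1.2.join p.2.2, join_self⟩
  left_inv σ := Subtype.ext (join_restrictPerm σ.2.2 _ _)
  right_inv _ := Prod.ext (Subtype.ext (restrictPerm_eq fun _ => join_lowerEmb _))
    (Subtype.ext (restrictPerm_eq fun _ => join_upperEmb _))

variable (n) in
def avoids231SigmaEquiv : {σ : Perm (Fin (n + 1)) // Avoids231 σ} ≃
    Σ k : Fin (n + 1), {σ : Perm (Fin (n + 1)) // Avoids231 σ ∧ σ k = Fin.last n} where
  toFun σ := ⟨σ.1⁻¹ (Fin.last n), σ.1, σ.2, (Perm.inv_eq_iff_eq.mp rfl).symm⟩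
  invFun p := ⟨p.2.1, p.2.2.1⟩
  left_inv _ := rfl
  right_inv := by
    rintro ⟨k, σ, hσ, hk⟩
    obtain rfl : k = σ⁻¹ (Fin.last n) := (Perm.inv_eq_iff_eq.mpr hk.symm).symm
    rfl

theorem natCard_avoids231 (n : ℕ) :
    Nat.card {σ : Perm (Fin n) // Avoids231 σ} = catalan n := by
  induction n using Nat.strong_induction_on with
  | _ n ih =>
    cases n with
    | zero =>
      have hall : ∀ σ : Perm (Fin 0), Avoids231 σ := fun _ ⟨i, _⟩ => i.elim0
      simp [Nat.card_congr (Equiv.subtypeUnivEquiv hall)]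
    | succ n =>
      rw [Nat.card_congr (avoids231SigmaEquiv n), Nat.card_sigma, catalan_succ]
      refine Finset.sum_congr rfl fun k _ => ?_
      rw [Nat.card_congr (avoids231FiberEquiv k), Nat.card_prod, ih k (by omega),
        ih (n - k) (by omega)]

theorem ncard_avoids231 (n : ℕ) : {σ : Perm (Fin n) | Avoids231 σ}.ncard = catalan n :=
  natCard_avoids231 n

end Catalan

section SimionSchmidt

variable {n : ℕ} {σ τ : Perm (Fin n)}

def IsLeftToRightMin (σ : Perm (Fin n)) (i : Fin n) : Prop :=
  ∀ j < i, σ i < σ j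

def leftToRightMinima (σ : Perm (Fin n)) : Set (Fin n × Fin n) :=
  {p | σ p.1 = p.2 ∧ IsLeftToRightMin σ p.1}

theorem exists_lt_apply_lt_of_leftToRightMinima_eq (h : leftToRightMinima σ = leftToRightMinima τ)
    {p : Fin n} (hp : σ p ≠ τ p) : ∃ i < p, σ i < σ p := by
  by_contra! hmin
  have hmem : (p, σ p) ∈ leftToRightMinima τ :=
    h ▸ ⟨rfl, fun j hj => (hmin j hj).lt_of_ne (σ.injective.ne hj.ne')⟩
  exact hp hmem.1.symm

theorem lt_inv_apply_of_eqOn_Iio {p : Fin n} (hagree : ∀ j < p, σ j = τ j) (hp : σ p ≠ τ p) :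
    p < τ⁻¹ (σ p) := by
  refine lt_of_not_ge fun hle => ?_
  rcases hle.lt_or_eq with hlt | heq
  · have := hagree _ hlt
    rw [Perm.coe_inv, apply_symm_apply] at this
    exact hlt.ne (σ.injective this)
  · exact hp (Perm.inv_eq_iff_eq.mp heq)

theorem Avoids132.not_lt_of_eqOn_Iio (hτ : Avoids132 τ)
    (h : leftToRightMinima σ = leftToRightMinima τ) {p : Fin n} (hagree : ∀ j < p, σ j = τ j) :
    ¬ σ p < τ p := fun hlt => by
  obtain ⟨i, hip, hi⟩ := exists_lt_apply_lt_of_leftToRightMinima_eq h hlt.ne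
  have hq := lt_inv_apply_of_eqOn_Iio hagree hlt.ne
  exact hτ ⟨i, p, _, hip, hq, by simpa [← hagree i hip] using hi, by simpa using hlt⟩

theorem Avoids123.not_lt_of_eqOn_Iio (hσ : Avoids123 σ)
    (h : leftToRightMinima σ = leftToRightMinima τ) {p : Fin n} (hagree : ∀ j < p, σ j = τ j) :
    ¬ σ p < τ p := fun hlt => by
  obtain ⟨i, hip, hi⟩ := exists_lt_apply_lt_of_leftToRightMinima_eq h hlt.ne
  have hq := lt_inv_apply_of_eqOn_Iio (fun j hj => (hagree j hj).symm) hlt.ne'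
  exact hσ ⟨i, p, _, hip, hq, hi, by simpa using hlt⟩

theorem leftToRightMinima_injOn {P : Perm (Fin n) → Prop}
    (hP : ∀ σ τ, P σ → P τ → leftToRightMinima σ = leftToRightMinima τ →
      ∀ p, (∀ j < p, σ j = τ j) → ¬ σ p < τ p) :
    InjOn leftToRightMinima {σ | P σ} := by
  intro σ hσ τ hτ h
  by_contra hne
  obtain ⟨p, hp, hmin⟩ := WellFounded.has_min wellFounded_lt {i | σ i ≠ τ i}
    (not_forall.mp (mt Equiv.ext hne))
  have hagree : ∀ j < p, σ j = τ j := fun j hj => not_not.mp fun hj' => hmin j hj' hj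
  rcases lt_or_gt_of_ne hp with hlt | hgt
  · exact hP σ τ hσ hτ h p hagree hlt
  · exact hP τ σ hτ hσ h.symm p (fun j hj => (hagree j hj).symm) hgt

theorem isLeftToRightMin_iff_of_lt {a b c : Fin n} (hab : a < b) (hac : a < c)
    (hb : σ a < σ b) (hc : σ a < σ c) {i : Fin n} :
    IsLeftToRightMin σ i ↔ i ≠ b ∧ i ≠ c ∧ ∀ j < i, j ≠ b → j ≠ c → σ i < σ j := by
  refine ⟨fun h => ⟨?_, ?_, fun j hj _ _ => h j hj⟩, fun ⟨hib, hic, h⟩ j hj => ?_⟩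
  · rintro rfl
    exact (h a hab).asymm hb
  · rintro rfl
    exact (h a hac).asymm hc
  rcases eq_or_ne j b with rfl | hjb
  · exact (h a (hab.trans hj) hab.ne hac.ne).trans hb
  rcases eq_or_ne j c with rfl | hjc
  · exact (h a (hac.trans hj) hab.ne hac.ne).trans hc
  exact h j hj hjb hjc

theorem leftToRightMinima_mul_swap {a b c : Fin n} (hab : a < b) (hac : a < c)
    (hb : σ a < σ b) (hc : σ a < σ c) :
    leftToRightMinima (σ * swap b c) = leftToRightMinima σ := by
  have hfix : ∀ {j}, j ≠ b → j ≠ c → (σ * swap b c) j = σ j := fun hjb hjc => by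
    rw [Perm.mul_apply, swap_apply_of_ne_of_ne hjb hjc]
  have hb' : (σ * swap b c) a < (σ * swap b c) b := by
    rwa [hfix hab.ne hac.ne, Perm.mul_apply, swap_apply_left]
  have hc' : (σ * swap b c) a < (σ * swap b c) c := by
    rwa [hfix hab.ne hac.ne, Perm.mul_apply, swap_apply_right]
  ext ⟨i, v⟩
  simp only [leftToRightMinima, mem_ofPred_eq, isLeftToRightMin_iff_of_lt hab hac hb hc,
    isLeftToRightMin_iff_of_lt hab hac hb' hc']
  constructor <;> rintro ⟨hv, hib, hic, h⟩ <;>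
    refine ⟨by simpa [hfix hib hic] using hv, hib, hic, fun j hj hjb hjc => ?_⟩ <;>
    simpa [hfix hib hic, hfix hjb hjc] using h j hj hjb hjc

def weight (σ : Perm (Fin n)) : ℕ :=
  ∑ i : Fin n, (i : ℕ) * σ i

theorem weight_mul_swap_lt {b c : Fin n} (hbc : b < c) (h : σ b < σ c) :
    weight (σ * swap b c) < weight σ := by
  have hreindex : weight (σ * swap b c) = ∑ i, (swap b c i : ℕ) * σ i := by
    rw [weight, ← Equiv.sum_comp (swap b c)]
    simp
  have hdiff : ((weight σ : ℤ) - weight (σ * swap b c)) = ((c : ℤ) - b) * ((σ c : ℤ) - σ b) := by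
    rw [hreindex, weight]
    push_cast
    rw [← Finset.sum_sub_distrib, Fintype.sum_eq_add b c hbc.ne fun x hx => by
      simp [swap_apply_of_ne_of_ne hx.1 hx.2]]
    simp only [swap_apply_left, swap_apply_right]
    ring
  have hpos : (0 : ℤ) < ((c : ℤ) - b) * ((σ c : ℤ) - σ b) :=
    mul_pos (sub_pos.mpr (by exact_mod_cast hbc)) (sub_pos.mpr (by exact_mod_cast h))
  omega

variable (σ) in
theorem exists_avoids123_leftToRightMinima_eq :
    ∃ τ, Avoids123 τ ∧ leftToRightMinima τ = leftToRightMinima σ := by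
  obtain ⟨τ, hτ, hmin⟩ := Set.exists_min_image {τ | leftToRightMinima τ = leftToRightMinima σ}
    weight (Set.toFinite _) ⟨σ, rfl⟩
  refine ⟨τ, fun ⟨a, b, c, hab, hbc, h₁, h₂⟩ => ?_, hτ⟩
  have hswap := leftToRightMinima_mul_swap hab (hab.trans hbc) h₁ (h₁.trans h₂)
  exact (weight_mul_swap_lt hbc h₂).not_ge (hmin _ (hswap.trans hτ))

variable (σ) in
theorem exists_avoids132_leftToRightMinima_eq :
    ∃ τ, Avoids132 τ ∧ leftToRightMinima τ = leftToRightMinima σ := by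
  obtain ⟨τ, hτ, hmax⟩ := Set.exists_max_image {τ | leftToRightMinima τ = leftToRightMinima σ}
    weight (Set.toFinite _) ⟨σ, rfl⟩
  refine ⟨τ, fun ⟨a, b, c, hab, hbc, h₁, h₂⟩ => ?_, hτ⟩
  have hswap := leftToRightMinima_mul_swap hab (hab.trans hbc) (h₁.trans h₂) h₁
  have hlt : weight τ < weight (τ * swap b c) := by
    simpa only [mul_swap_mul_self] using
      weight_mul_swap_lt (σ := τ * swap b c) hbc (by simpa [swap_apply_left, swap_apply_right])
  exact hlt.not_ge (hmax _ (hswap.trans hτ))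

theorem image_leftToRightMinima_eq_range {P : Perm (Fin n) → Prop}
    (hP : ∀ σ, ∃ τ, P τ ∧ leftToRightMinima τ = leftToRightMinima σ) :
    leftToRightMinima '' {σ | P σ} = range leftToRightMinima :=
  (image_subset_range _ _).antisymm fun _ ⟨σ, hσ⟩ => hσ ▸ hP σ

theorem ncard_avoids132_eq_ncard_avoids123 :
    {σ : Perm (Fin n) | Avoids132 σ}.ncard = {σ : Perm (Fin n) | Avoids123 σ}.ncard := by
  rw [← (leftToRightMinima_injOn fun _ _ _ hτ h _ => hτ.not_lt_of_eqOn_Iio h).ncard_image,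
    ← (leftToRightMinima_injOn fun _ _ hσ _ h _ => hσ.not_lt_of_eqOn_Iio h).ncard_image,
    image_leftToRightMinima_eq_range exists_avoids132_leftToRightMinima_eq,
    image_leftToRightMinima_eq_range exists_avoids123_leftToRightMinima_eq]

end SimionSchmidt

/-- For every pattern `η ∈ S₃`, the number of `η`-avoiding permutations of `[n]` is the
`n`-th Catalan number. -/
theorem avoiding_card_eq_catalan (n : ℕ) (η : Equiv.Perm (Fin 3)) :
    {σ : Equiv.Perm (Fin n) | Avoids σ η}.ncard = catalan n := by
  have h231 : {σ : Perm (Fin n) | Avoids σ (finRotate 3)}.ncard = catalan n := by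
    simp_rw [avoids_finRotate_iff]
    exact ncard_avoids231 n
  have h132 : {σ : Perm (Fin n) | Avoids σ (finRotate 3 * Fin.revPerm)}.ncard = catalan n :=
    (ncard_avoids_mul_revPerm _).trans h231
  have h123 : {σ : Perm (Fin n) | Avoids σ (1 : Perm (Fin 3))}.ncard = catalan n := by
    simp_rw [avoids_one_iff, ← ncard_avoids132_eq_ncard_avoids123,
      ← avoids_finRotate_mul_revPerm_iff]
    exact h132
  -- in one-line notation: 123, 321, 231, 312, 132, 213
  have hS₃ : ∀ ξ : Perm (Fin 3), ξ = 1 ∨ ξ = 1 * Fin.revPerm ∨ ξ = finRotate 3 ∨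
      ξ = (finRotate 3)⁻¹ ∨ ξ = finRotate 3 * Fin.revPerm ∨ ξ = Fin.revPerm * finRotate 3 := by
    decide
  rcases hS₃ η with rfl | rfl | rfl | rfl | rfl | rfl
  · exact h123
  · rwa [ncard_avoids_mul_revPerm]
  · exact h231
  · rwa [ncard_avoids_inv]
  · exact h132
  · rwa [ncard_avoids_revPerm_mul]
end

section
/- For every permutation σ ∈ Sₙ, the length A(σ) of the longest alternating subsequence of σ and the length A^{+,-}(σ) of the longest alternating subsequence beginning with an ascent and ending with a descent (set to 1 if none exists) satisfy A(σ) − A^{+,-}(σ) ∈ {0, 1, 2}. -/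
open Equiv Filter Real Set

section AuxAltPM

lemma card_le_of_sm {n k : ℕ} (f : Fin k → Fin n) (hf : StrictMono f) : k ≤ n := by
  simpa using Fintype.card_le_of_injective f hf.injective

lemma restrict_alt {n k a k' : ℕ} (σ : Equiv.Perm (Fin n)) (f : Fin k → Fin n)
    (hf : IsAltSub σ f) (h : k' + a ≤ k) :
    IsAltSub σ (fun i : Fin k' => f ⟨i + a, by omega⟩) := by
  constructor
  · intro i j hij
    apply hf.1
    simp only [Fin.mk_lt_mk]
    omega
  · intro j hj
    have := hf.2 (j + a) (by omega)
    simpa only [Nat.add_right_comm _ a] using this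

lemma fapp_congr {α : Type*} {k : ℕ} (f : Fin k → α) {x y : ℕ} (hx : x < k) (hy : y < k)
    (h : x = y) : f ⟨x, hx⟩ = f ⟨y, hy⟩ := by subst h; rfl

lemma hNe_lem {n k : ℕ} (σ : Equiv.Perm (Fin n)) (f : Fin k → Fin n) (hf : StrictMono f)
    {x y : ℕ} (hx : x < k) (hy : y < k) (h : x ≠ y) : σ (f ⟨x, hx⟩) ≠ σ (f ⟨y, hy⟩) := by
  intro he
  exact h (Fin.mk_eq_mk.mp (hf.injective (σ.injective he)))

/-- ascent at step `j+1` implies descent at step `j` (flexible indices). -/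
lemma alt_flip {n k : ℕ} (σ : Equiv.Perm (Fin n)) (f : Fin k → Fin n) (hf : IsAltSub σ f)
    {j u v x y : ℕ} {hu : u < k} {hv : v < k} {hx : x < k} {hy : y < k} (hj : j + 2 < k)
    (eu : u = j + 1) (ev : v = j + 2) (ex : x = j + 1) (ey : y = j)
    (h : σ (f ⟨u, hu⟩) < σ (f ⟨v, hv⟩)) : σ (f ⟨x, hx⟩) < σ (f ⟨y, hy⟩) := by
  subst eu; subst ev; subst ex; subst ey
  have h1 := hf.2 _ hj
  exact lt_of_le_of_ne (not_lt.mp (fun haj => (h1.mp haj) h))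
    (hNe_lem σ f hf.1 hx hy (by omega))

/-- no ascent at step `j` implies ascent at step `j+1` (flexible indices). -/
lemma alt_flip' {n k : ℕ} (σ : Equiv.Perm (Fin n)) (f : Fin k → Fin n) (hf : IsAltSub σ f)
    {j x y : ℕ} {hx : x < k} {hy : y < k} (hj : j + 2 < k)
    (ex : x = j + 1) (ey : y = j + 2)
    (h : ¬ σ (f ⟨j, by omega⟩) < σ (f ⟨j + 1, by omega⟩)) :
    σ (f ⟨x, hx⟩) < σ (f ⟨y, hy⟩) := by
  subst ex; subst ey
  have h1 := hf.2 _ hj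
  by_contra hn
  exact h (h1.mpr hn)

/-- ascent at step `j` implies no ascent at step `j+1` (flexible indices). -/
lemma not_asc_pair {n k : ℕ} (σ : Equiv.Perm (Fin n)) (f : Fin k → Fin n) (hf : IsAltSub σ f)
    {j u v : ℕ} {hu : u < k} {hv : v < k} (hj : j + 2 < k)
    (eu : u = j + 1) (ev : v = j + 2)
    (h : σ (f ⟨j, by omega⟩) < σ (f ⟨j + 1, by omega⟩)) :
    ¬ σ (f ⟨u, hu⟩) < σ (f ⟨v, hv⟩) := by
  subst eu; subst ev
  exact (hf.2 _ hj).mp h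

/-- reversal: not `σ u < σ v`, `u ≠ v` gives `σ v < σ u` (flexible indices). -/
lemma rev_pair {n k : ℕ} (σ : Equiv.Perm (Fin n)) (f : Fin k → Fin n) (hf : StrictMono f)
    {u v x y : ℕ} {hu : u < k} {hv : v < k} {hx : x < k} {hy : y < k}
    (ex : x = v) (ey : y = u) (hne : u ≠ v)
    (h : ¬ σ (f ⟨u, hu⟩) < σ (f ⟨v, hv⟩)) : σ (f ⟨x, hx⟩) < σ (f ⟨y, hy⟩) := by
  subst ex; subst ey
  exact lt_of_le_of_ne (not_lt.mp h) (hNe_lem σ f hf hx hy (by omega))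

lemma asc_pair_id {n k : ℕ} (σ : Equiv.Perm (Fin n)) (f : Fin k → Fin n)
    {u v x y : ℕ} {hu : u < k} {hv : v < k} {hx : x < k} {hy : y < k}
    (ex : x = u) (ey : y = v)
    (h : σ (f ⟨u, hu⟩) < σ (f ⟨v, hv⟩)) : σ (f ⟨x, hx⟩) < σ (f ⟨y, hy⟩) := by
  subst ex; subst ey; exact h

set_option maxHeartbeats 2000000 in
lemma isAltPM_of {n k : ℕ} (σ : Equiv.Perm (Fin n)) (f : Fin k → Fin n)
    (hf : IsAltSub σ f) (hk : 3 ≤ k)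
    (h0 : σ (f ⟨0, by omega⟩) < σ (f ⟨1, by omega⟩))
    (hend : σ (f ⟨k - 1, by omega⟩) < σ (f ⟨k - 2, by omega⟩)) :
    IsAltPM σ f := by
  refine ⟨hf, hk, ?_, fun _ => h0, fun _ => hend⟩
  set F : ℕ → Fin n := fun j => f ⟨min j (k - 1), by omega⟩ with hF
  have hFeq : ∀ j (h : j < k), F j = f ⟨j, h⟩ := by
    intro j h
    simp only [hF]
    exact fapp_congr f (by omega) h (by omega)
  have hAlt : ∀ j, j + 2 < k →
      (σ (F j) < σ (F (j + 1)) ↔ ¬ σ (F (j + 1)) < σ (F (j + 2))) := by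
    intro j hj
    rw [hFeq j (by omega), hFeq (j+1) (by omega), hFeq (j+2) (by omega)]
    exact hf.2 j hj
  have hPar : ∀ j, j + 1 < k → (σ (F j) < σ (F (j + 1)) ↔ Even j) := by
    intro j
    induction j with
    | zero =>
      intro hj
      simp only [Even.zero, iff_true]
      rw [hFeq 0 (by omega), hFeq 1 (by omega)]
      exact h0
    | succ m ih =>
      intro hj
      have h1 := hAlt m (by omega)
      have h2 := ih (by omega)
      have h3 := Nat.even_add_one (n := m)
      have e : m + 1 + 1 = m + 2 := rfl
      rw [e]
      tauto
  have hlast : ¬ σ (F (k - 2)) < σ (F (k - 2 + 1)) := by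
    rw [hFeq (k-2) (by omega), hFeq (k-2+1) (by omega),
      fapp_congr f (by omega) (by omega) (show k - 2 + 1 = k - 1 by omega)]
    exact lt_asymm hend
  have hodd : ¬ Even (k - 2) := by
    have := hPar (k - 2) (by omega)
    tauto
  rcases Nat.even_or_odd k with he | ho
  · exfalso
    apply hodd
    rw [Nat.even_sub (by omega)]
    simp [he]
  · exact ho

set_option maxHeartbeats 2000000 in
lemma exists_pm {n k : ℕ} (σ : Equiv.Perm (Fin n)) (f : Fin k → Fin n)
    (hf : IsAltSub σ f) (hk : 4 ≤ k) :
    ∃ k', k - 2 ≤ k' ∧ ∃ g : Fin k' → Fin n, IsAltPM σ g := by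
  by_cases hP0 : σ (f ⟨0, by omega⟩) < σ (f ⟨1, by omega⟩)
  · by_cases hPe : σ (f ⟨k - 2, by omega⟩) < σ (f ⟨k - 1, by omega⟩)
    · -- starts with ascent, ends with ascent: drop the last entry
      refine ⟨k - 1, by omega, fun i : Fin (k - 1) => f ⟨i + 0, by omega⟩,
        isAltPM_of σ _ (restrict_alt σ f hf (by omega)) (by omega) ?_ ?_⟩
      · exact asc_pair_id σ f (by first | (simp only [Fin.val_mk]; omega) | (simp only [Fin.val_mk]) | omega) (by first | (simp only [Fin.val_mk]; omega) | (simp only [Fin.val_mk]) | omega) hP0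
      · exact alt_flip σ f hf (j := k - 3) (by omega) (by first | (simp only [Fin.val_mk]; omega) | (simp only [Fin.val_mk]) | omega)
          (by first | (simp only [Fin.val_mk]; omega) | (simp only [Fin.val_mk]) | omega) (by first | (simp only [Fin.val_mk]; omega) | (simp only [Fin.val_mk]) | omega)
          (by first | (simp only [Fin.val_mk]; omega) | (simp only [Fin.val_mk]) | omega) hPe
    · -- starts with ascent, ends with descent: take f itself
      exact ⟨k, by omega, f, isAltPM_of σ f hf (by omega) hP0
        (rev_pair σ f hf.1 (by omega) (by omega) (by omega) hPe)⟩
  · by_cases hPe : σ (f ⟨k - 2, by omega⟩) < σ (f ⟨k - 1, by omega⟩)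
    · -- starts with descent, ends with ascent: drop both ends
      have hk5 : 5 ≤ k := by
        by_contra hlt
        have h12 : σ (f ⟨1, by omega⟩) < σ (f ⟨2, by omega⟩) :=
          alt_flip' σ f hf (j := 0) (by omega) (by omega) (by omega) hP0
        exact not_asc_pair σ f hf (j := 1) (by omega) (by omega) (by omega) h12 hPe
      refine ⟨k - 2, by omega, fun i : Fin (k - 2) => f ⟨i + 1, by omega⟩,
        isAltPM_of σ _ (restrict_alt σ f hf (by omega)) (by omega) ?_ ?_⟩
      · exact alt_flip' σ f hf (j := 0) (by omega) (by first | (simp only [Fin.val_mk]; omega) | (simp only [Fin.val_mk]) | omega) (by first | (simp only [Fin.val_mk]; omega) | (simp only [Fin.val_mk]) | omega) hP0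
      · exact alt_flip σ f hf (j := k - 3) (by omega) (by first | (simp only [Fin.val_mk]; omega) | (simp only [Fin.val_mk]) | omega)
          (by first | (simp only [Fin.val_mk]; omega) | (simp only [Fin.val_mk]) | omega) (by first | (simp only [Fin.val_mk]; omega) | (simp only [Fin.val_mk]) | omega)
          (by first | (simp only [Fin.val_mk]; omega) | (simp only [Fin.val_mk]) | omega) hPe
    · -- starts with descent, ends with descent: drop the first entry
      refine ⟨k - 1, by omega, fun i : Fin (k - 1) => f ⟨i + 1, by omega⟩,
        isAltPM_of σ _ (restrict_alt σ f hf (by omega)) (by omega) ?_ ?_⟩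
      · exact alt_flip' σ f hf (j := 0) (by omega) (by first | (simp only [Fin.val_mk]; omega) | (simp only [Fin.val_mk]) | omega) (by first | (simp only [Fin.val_mk]; omega) | (simp only [Fin.val_mk]) | omega) hP0
      · exact rev_pair σ f hf.1 (by first | (simp only [Fin.val_mk]; omega) | (simp only [Fin.val_mk]) | omega) (by first | (simp only [Fin.val_mk]; omega) | (simp only [Fin.val_mk]) | omega) (by omega) hPe

end AuxAltPM

/-- `A(σ) - A^{+,-}(σ) ∈ {0, 1, 2}` for every permutation `σ` of `[n]`, `n ≥ 1`. -/
theorem altLen_sub_apm_mem (n : ℕ) (σ : Equiv.Perm (Fin (n + 1))) :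
    ∃ d ∈ ({0, 1, 2} : Set ℕ), altLen σ = apm σ + d := by
  classical
  set S : Set ℕ := {k | ∃ f : Fin k → Fin (n + 1), IsAltSub σ f} with hS
  set T : Set ℕ := {k | ∃ f : Fin k → Fin (n + 1), IsAltPM σ f} with hT
  have hSbdd : BddAbove S := ⟨n + 1, fun k hk => by
    obtain ⟨f, hf, -⟩ := hk
    exact card_le_of_sm f hf⟩
  have hTbdd : BddAbove T := ⟨n + 1, fun k hk => by
    obtain ⟨f, hf⟩ := hk
    exact card_le_of_sm f hf.1.1⟩
  have hSne : S.Nonempty := ⟨0, Fin.elim0, fun a => a.elim0, fun j h => by omega⟩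
  have hmem : altLen σ ∈ S := Nat.sSup_mem hSne hSbdd
  have h1S : (1 : ℕ) ∈ S :=
    ⟨fun _ => 0, fun a b hab => absurd hab (by omega), fun j h => by omega⟩
  have h1le : 1 ≤ altLen σ := le_csSup hSbdd h1S
  have hapm : apm σ = max (sSup T) 1 := by simp [apm, hT]
  have hTle : sSup T ≤ altLen σ := by
    rcases T.eq_empty_or_nonempty with he | hne
    · rw [he, csSup_empty]
      exact bot_le
    · exact csSup_le hne fun k hk => le_csSup hSbdd (by
        obtain ⟨f, hf⟩ := hk
        exact ⟨f, hf.1⟩)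
  have hle1 : apm σ ≤ altLen σ := by
    rw [hapm]
    exact max_le hTle h1le
  have hle2 : altLen σ ≤ apm σ + 2 := by
    obtain ⟨f, hf⟩ := hmem
    by_cases hk : 4 ≤ altLen σ
    · obtain ⟨k', hk', g, hg⟩ := exists_pm σ f hf hk
      have : k' ≤ sSup T := le_csSup hTbdd ⟨g, hg⟩
      have : k' ≤ apm σ := by rw [hapm]; exact this.trans (le_max_left _ _)
      omega
    · have : 1 ≤ apm σ := by rw [hapm]; exact le_max_right _ _
      omega
  exact ⟨altLen σ - apm σ, by simp only [Set.mem_insert_iff, Set.mem_singleton_iff]; omega,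
    by omega⟩
end

section
/- Let Mₙ(λ) = E[e^{λ A⁺⁻ₙ}] denote the moment generating function of the longest ascent-first/descent-last alternating subsequence length under the uniform measure on 231-avoiding permutations of [n] (with M₀(λ)=1). Then for n ≥ 3, Cₙ·Mₙ(λ) = e^λ · Σ_{j=2}^{n−1} C_{j−1}M_{j−1}(λ)·C_{n−j}M_{n−j}(λ) + 2·C_{n−1}M_{n−1}(λ). -/
open Equiv Filter Real Set

namespace APMrec
open Finset Equiv

variable {n m k : ℕ}

/-- Alternating with ascents exactly at even steps. -/
def DirE (σ : Equiv.Perm (Fin n)) {k : ℕ} (f : Fin k → Fin n) : Prop :=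
  ∀ (j : ℕ) (h : j + 1 < k), (σ (f ⟨j, by omega⟩) < σ (f ⟨j + 1, h⟩) ↔ Even j)

def Wit (σ : Equiv.Perm (Fin n)) {k : ℕ} (f : Fin k → Fin n) : Prop :=
  StrictMono f ∧ DirE σ f

def W (σ : Equiv.Perm (Fin n)) : Set ℕ := {k | Odd k ∧ ∃ f : Fin k → Fin n, Wit σ f}

lemma strictMono_le_card {f : Fin k → Fin n} (hf : StrictMono f) : k ≤ n := by
  simpa using Fintype.card_le_of_injective f hf.injective

lemma W_bddAbove (σ : Equiv.Perm (Fin n)) : BddAbove (W σ) :=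
  ⟨n, fun _ hk => strictMono_le_card hk.2.choose_spec.1⟩

lemma one_mem_W (σ : Equiv.Perm (Fin n)) (hn : n ≠ 0) : 1 ∈ W σ := by
  refine ⟨odd_one, fun _ => ⟨0, Nat.pos_of_ne_zero hn⟩, ?_, ?_⟩
  · intro a b hab
    exact absurd (Fin.lt_def.mp hab) (by omega)
  · intro j h; exact absurd h (by omega)

lemma wit_isAltPM {σ : Equiv.Perm (Fin n)} {f : Fin k → Fin n} (hw : Wit σ f)
    (h3 : 3 ≤ k) (hodd : Odd k) : IsAltPM σ f := by
  obtain ⟨hsm, hd⟩ := hw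
  refine ⟨⟨hsm, ?_⟩, h3, hodd, ?_, ?_⟩
  · intro j h
    rw [hd j (by omega), hd (j+1) (by omega)]
    simp [Nat.even_add_one]
  · intro _
    exact (hd 0 (by omega)).mpr Even.zero
  · intro _
    have hlt : (⟨k-2, by omega⟩ : Fin k) < ⟨k-1, by omega⟩ := by
      simp only [Fin.mk_lt_mk]; omega
    have h2 : ¬ (σ (f ⟨k-2, by omega⟩) < σ (f ⟨k-1, by omega⟩)) := by
      have hidx : (⟨k-2+1, by omega⟩ : Fin k) = ⟨k-1, by omega⟩ := by
        simp only [Fin.mk.injEq]; omega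
      have := hd (k-2) (by omega)
      rw [hidx] at this
      rw [this]
      simp only [Nat.even_iff, Nat.odd_iff] at hodd ⊢
      omega
    have hne : σ (f ⟨k-1, by omega⟩) ≠ σ (f ⟨k-2, by omega⟩) := by
      intro he
      have := hsm.injective (σ.injective he)
      simp only [Fin.mk.injEq] at this
      omega
    exact (le_of_not_gt h2).lt_of_ne hne

lemma isAltPM_wit {σ : Equiv.Perm (Fin n)} {f : Fin k → Fin n} (h : IsAltPM σ f) :
    Wit σ f := by
  obtain ⟨⟨hsm, halt⟩, h3, hodd, hstart, _⟩ := h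
  refine ⟨hsm, ?_⟩
  intro j
  induction j with
  | zero =>
    intro h
    exact iff_of_true (hstart h3) Even.zero
  | succ j ih =>
    intro h
    have h2 : j + 2 < k := by omega
    have halt' := halt j h2
    have ihj := ih (by omega)
    rw [Nat.even_add_one, ← ihj]
    tauto

lemma le_apm_of_mem_W {σ : Equiv.Perm (Fin n)} (hn : n ≠ 0) (hk : k ∈ W σ) :
    k ≤ apm σ := by
  rw [apm, if_neg hn]
  obtain ⟨hodd, f, hw⟩ := hk
  rcases Nat.lt_or_ge k 3 with h | h
  · have : k = 1 := by simp only [Nat.odd_iff] at hodd; omega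
    omega
  · have hmem : k ∈ {k | ∃ f : Fin k → Fin n, IsAltPM σ f} := ⟨f, wit_isAltPM hw h hodd⟩
    have hb : BddAbove {k | ∃ f : Fin k → Fin n, IsAltPM σ f} :=
      ⟨n, fun _ hm => strictMono_le_card hm.choose_spec.1.1⟩
    exact le_trans (le_csSup hb hmem) (le_max_left _ _)

lemma apm_mem_W (σ : Equiv.Perm (Fin n)) (hn : n ≠ 0) : apm σ ∈ W σ := by
  rw [apm, if_neg hn]
  rcases Set.eq_empty_or_nonempty {k | ∃ f : Fin k → Fin n, IsAltPM σ f} with he | hne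
  · rw [he]
    have h0 : sSup (∅ : Set ℕ) = 0 := by
      rw [csSup_empty]; rfl
    rw [h0]
    simpa using one_mem_W σ hn
  · have hb : BddAbove {k | ∃ f : Fin k → Fin n, IsAltPM σ f} :=
      ⟨n, fun _ hm => strictMono_le_card hm.choose_spec.1.1⟩
    have hmem := Nat.sSup_mem hne hb
    obtain ⟨f, hf⟩ := hmem
    have h3 : 3 ≤ sSup {k | ∃ f : Fin k → Fin n, IsAltPM σ f} := hf.2.1
    have hmax : max (sSup {k | ∃ f : Fin k → Fin n, IsAltPM σ f}) 1
        = sSup {k | ∃ f : Fin k → Fin n, IsAltPM σ f} := by omega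
    rw [hmax]
    exact ⟨hf.2.2.1, f, isAltPM_wit hf⟩

lemma one_le_apm (σ : Equiv.Perm (Fin n)) (hn : n ≠ 0) : 1 ≤ apm σ :=
  le_apm_of_mem_W hn (one_mem_W σ hn)

lemma odd_apm (σ : Equiv.Perm (Fin n)) (hn : n ≠ 0) : Odd (apm σ) :=
  (apm_mem_W σ hn).1

lemma wit_comp_iff {τ : Equiv.Perm (Fin m)} {σ : Equiv.Perm (Fin n)} {e : Fin m → Fin n}
    (he : StrictMono e) (hc : ∀ i i', τ i < τ i' ↔ σ (e i) < σ (e i'))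
    {k} (g : Fin k → Fin m) : Wit τ g ↔ Wit σ (e ∘ g) := by
  constructor
  · rintro ⟨hsm, hd⟩
    refine ⟨he.comp hsm, fun j h => ?_⟩
    rw [Function.comp_apply, Function.comp_apply, ← hc]
    exact hd j h
  · rintro ⟨hsm, hd⟩
    refine ⟨fun a b hab => he.lt_iff_lt.mp (hsm hab), fun j h => ?_⟩
    rw [hc]
    exact hd j h

end APMrec
namespace APMrec
open Finset Equiv

variable {n l r : ℕ}

def gval (hn : n = l + 1 + r) (α : Equiv.Perm (Fin l)) (β : Equiv.Perm (Fin r))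
    (i : Fin n) : Fin n :=
  if hl : i.val < l then ⟨(α ⟨i.val, hl⟩).val, by have := (α ⟨i.val, hl⟩).isLt; omega⟩
  else if he : i.val = l then ⟨l + r, by omega⟩
  else ⟨l + (β ⟨i.val - (l+1), by have := i.isLt; omega⟩).val,
        by have := (β ⟨i.val - (l+1), by have := i.isLt; omega⟩).isLt; omega⟩

lemma gval_left (hn : n = l + 1 + r) (α : Equiv.Perm (Fin l)) (β : Equiv.Perm (Fin r))
    {i : Fin n} (hi : i.val < l) :
    (gval hn α β i).val = (α ⟨i.val, hi⟩).val := by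
  rw [gval, dif_pos hi]

lemma gval_mid (hn : n = l + 1 + r) (α : Equiv.Perm (Fin l)) (β : Equiv.Perm (Fin r))
    {i : Fin n} (hi : i.val = l) :
    (gval hn α β i).val = l + r := by
  rw [gval, dif_neg (by omega), dif_pos hi]

lemma gval_right (hn : n = l + 1 + r) (α : Equiv.Perm (Fin l)) (β : Equiv.Perm (Fin r))
    {i : Fin n} (hi : l < i.val) :
    (gval hn α β i).val
      = l + (β ⟨i.val - (l+1), by have := i.isLt; omega⟩).val := by
  rw [gval, dif_neg (by omega), dif_neg (by omega)]

lemma gval_injective (hn : n = l + 1 + r) (α : Equiv.Perm (Fin l)) (β : Equiv.Perm (Fin r)) :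
    Function.Injective (gval hn α β) := by
  intro i j hij
  have hij' : (gval hn α β i).val = (gval hn α β j).val := by rw [hij]
  rcases Nat.lt_trichotomy i.val l with hi | hi | hi
  · rcases Nat.lt_trichotomy j.val l with hj | hj | hj
    · rw [gval_left hn α β hi, gval_left hn α β hj] at hij'
      have := α.injective (Fin.ext hij')
      simp only [Fin.mk.injEq] at this
      exact Fin.ext this
    · rw [gval_left hn α β hi, gval_mid hn α β hj] at hij'
      have := (α ⟨i.val, hi⟩).isLt
      omega
    · rw [gval_left hn α β hi, gval_right hn α β hj] at hij'
      have := (α ⟨i.val, hi⟩).isLt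
      omega
  · rcases Nat.lt_trichotomy j.val l with hj | hj | hj
    · rw [gval_mid hn α β hi, gval_left hn α β hj] at hij'
      have := (α ⟨j.val, hj⟩).isLt
      omega
    · exact Fin.ext (by omega)
    · rw [gval_mid hn α β hi, gval_right hn α β hj] at hij'
      have := (β ⟨j.val - (l+1), by have := j.isLt; omega⟩).isLt
      omega
  · rcases Nat.lt_trichotomy j.val l with hj | hj | hj
    · rw [gval_right hn α β hi, gval_left hn α β hj] at hij'
      have := (α ⟨j.val, hj⟩).isLt
      omega
    · rw [gval_right hn α β hi, gval_mid hn α β hj] at hij'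
      have := (β ⟨i.val - (l+1), by have := i.isLt; omega⟩).isLt
      omega
    · rw [gval_right hn α β hi, gval_right hn α β hj] at hij'
      have hb : (β ⟨i.val - (l+1), by have := i.isLt; omega⟩)
          = (β ⟨j.val - (l+1), by have := j.isLt; omega⟩) := Fin.ext (by omega)
      have := β.injective hb
      simp only [Fin.mk.injEq] at this
      exact Fin.ext (by omega)

noncomputable def gperm (hn : n = l + 1 + r) (α : Equiv.Perm (Fin l)) (β : Equiv.Perm (Fin r)) :
    Equiv.Perm (Fin n) :=
  Equiv.ofBijective _ (Finite.injective_iff_bijective.mp (gval_injective hn α β))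

lemma gperm_apply (hn : n = l + 1 + r) (α : Equiv.Perm (Fin l)) (β : Equiv.Perm (Fin r))
    (i : Fin n) : gperm hn α β i = gval hn α β i := rfl

lemma gperm_left (hn : n = l + 1 + r) (α : Equiv.Perm (Fin l)) (β : Equiv.Perm (Fin r))
    {i : Fin n} (hi : i.val < l) :
    (gperm hn α β i).val = (α ⟨i.val, hi⟩).val := gval_left hn α β hi

lemma gperm_mid (hn : n = l + 1 + r) (α : Equiv.Perm (Fin l)) (β : Equiv.Perm (Fin r))
    {i : Fin n} (hi : i.val = l) :
    (gperm hn α β i).val = l + r := gval_mid hn α β hi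

lemma gperm_right (hn : n = l + 1 + r) (α : Equiv.Perm (Fin l)) (β : Equiv.Perm (Fin r))
    {i : Fin n} (hi : l < i.val) :
    (gperm hn α β i).val
      = l + (β ⟨i.val - (l+1), by have := i.isLt; omega⟩).val := gval_right hn α β hi

lemma gperm_left2 (hn : n = l + 1 + r) (α : Equiv.Perm (Fin l)) (β : Equiv.Perm (Fin r))
    {i : Fin n} {j : Fin l} (hij : i.val = j.val) :
    (gperm hn α β i).val = (α j).val := by
  have hi : i.val < l := by have := j.isLt; omega
  rw [gperm_left hn α β hi]
  have : (⟨i.val, hi⟩ : Fin l) = j := Fin.ext (by simp only [Fin.val_mk]; omega)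
  rw [this]

lemma gperm_right2 (hn : n = l + 1 + r) (α : Equiv.Perm (Fin l)) (β : Equiv.Perm (Fin r))
    {i : Fin n} {j : Fin r} (hij : i.val = l + 1 + j.val) :
    (gperm hn α β i).val = l + (β j).val := by
  rw [gperm_right hn α β (by omega)]
  have hb : (⟨i.val - (l+1), by have := i.isLt; omega⟩ : Fin r) = j :=
    Fin.ext (by simp only [Fin.val_mk]; omega)
  rw [hb]

lemma avoids_gperm_iff (hn : n = l + 1 + r) (α : Equiv.Perm (Fin l)) (β : Equiv.Perm (Fin r)) :
    Avoids231 (gperm hn α β) ↔ (Avoids231 α ∧ Avoids231 β) := by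
  constructor
  · intro hA
    constructor
    · rintro ⟨i₁, i₂, i₃, h12, h23, h31, h12'⟩
      rw [Fin.lt_def] at h12 h23 h31 h12'
      refine hA ⟨⟨i₁.val, by omega⟩, ⟨i₂.val, by omega⟩, ⟨i₃.val, by omega⟩,
        Fin.mk_lt_mk.mpr h12, Fin.mk_lt_mk.mpr h23, ?_, ?_⟩
      · rw [Fin.lt_def, gperm_left2 hn α β (j := i₃) rfl, gperm_left2 hn α β (j := i₁) rfl]
        exact h31
      · rw [Fin.lt_def, gperm_left2 hn α β (j := i₁) rfl, gperm_left2 hn α β (j := i₂) rfl]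
        exact h12'
    · rintro ⟨i₁, i₂, i₃, h12, h23, h31, h12'⟩
      rw [Fin.lt_def] at h12 h23 h31 h12'
      refine hA ⟨⟨l + 1 + i₁.val, by have := i₁.isLt; omega⟩,
        ⟨l + 1 + i₂.val, by have := i₂.isLt; omega⟩,
        ⟨l + 1 + i₃.val, by have := i₃.isLt; omega⟩,
        Fin.mk_lt_mk.mpr (by omega), Fin.mk_lt_mk.mpr (by omega), ?_, ?_⟩
      · rw [Fin.lt_def, gperm_right2 hn α β (j := i₃) rfl, gperm_right2 hn α β (j := i₁) rfl]
        omega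
      · rw [Fin.lt_def, gperm_right2 hn α β (j := i₁) rfl, gperm_right2 hn α β (j := i₂) rfl]
        omega
  · rintro ⟨hα, hβ⟩ ⟨i₁, i₂, i₃, h12, h23, h31, h12'⟩
    rw [Fin.lt_def] at h12 h23 h31 h12'
    rcases Nat.lt_trichotomy i₂.val l with h2 | h2 | h2
    · have h1 : i₁.val < l := by omega
      set j1 : Fin l := ⟨i₁.val, h1⟩ with hj1
      set j2 : Fin l := ⟨i₂.val, h2⟩ with hj2
      rcases Nat.lt_trichotomy i₃.val l with h3 | h3 | h3
      · set j3 : Fin l := ⟨i₃.val, h3⟩ with hj3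
        rw [gperm_left2 hn α β (j := j3) rfl, gperm_left2 hn α β (j := j1) rfl] at h31
        rw [gperm_left2 hn α β (j := j1) rfl, gperm_left2 hn α β (j := j2) rfl] at h12'
        exact hα ⟨j1, j2, j3, Fin.mk_lt_mk.mpr h12, Fin.mk_lt_mk.mpr h23,
          Fin.lt_def.mpr h31, Fin.lt_def.mpr h12'⟩
      · rw [gperm_mid hn α β h3, gperm_left2 hn α β (j := j1) rfl] at h31
        have := (α j1).isLt
        omega
      · set j3 : Fin r := ⟨i₃.val - (l+1), by have := i₃.isLt; omega⟩ with hj3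
        rw [gperm_right2 hn α β (j := j3) (by simp only [hj3, Fin.val_mk]; omega),
          gperm_left2 hn α β (j := j1) rfl] at h31
        have := (α j1).isLt
        omega
    · have h1 : i₁.val < l := by omega
      have h3 : l < i₃.val := by omega
      set j1 : Fin l := ⟨i₁.val, h1⟩ with hj1
      set j3 : Fin r := ⟨i₃.val - (l+1), by have := i₃.isLt; omega⟩ with hj3
      rw [gperm_right2 hn α β (j := j3) (by simp only [hj3, Fin.val_mk]; omega),
        gperm_left2 hn α β (j := j1) rfl] at h31
      have := (α j1).isLt
      omega
    · have h3 : l < i₃.val := by omega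
      set j2 : Fin r := ⟨i₂.val - (l+1), by have := i₂.isLt; omega⟩ with hj2
      set j3 : Fin r := ⟨i₃.val - (l+1), by have := i₃.isLt; omega⟩ with hj3
      have hv2 : (gperm hn α β i₂).val = l + (β j2).val :=
        gperm_right2 hn α β (by simp only [hj2, Fin.val_mk]; omega)
      have hv3 : (gperm hn α β i₃).val = l + (β j3).val :=
        gperm_right2 hn α β (by simp only [hj3, Fin.val_mk]; omega)
      rcases Nat.lt_trichotomy i₁.val l with h1 | h1 | h1
      · rw [gperm_left2 hn α β (j := ⟨i₁.val, h1⟩) rfl, hv3] at h31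
        have := (α (⟨i₁.val, h1⟩ : Fin l)).isLt
        omega
      · rw [gperm_mid hn α β h1, hv2] at h12'
        have := (β j2).isLt
        omega
      · set j1 : Fin r := ⟨i₁.val - (l+1), by have := i₁.isLt; omega⟩ with hj1
        have hv1 : (gperm hn α β i₁).val = l + (β j1).val :=
          gperm_right2 hn α β (by simp only [hj1, Fin.val_mk]; omega)
        rw [hv3, hv1] at h31
        rw [hv1, hv2] at h12'
        refine hβ ⟨j1, j2, j3, ?_, ?_, ?_, ?_⟩
        · simp only [hj1, hj2, Fin.mk_lt_mk]; omega
        · simp only [hj2, hj3, Fin.mk_lt_mk]; omega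
        · rw [Fin.lt_def]; omega
        · rw [Fin.lt_def]; omega

end APMrec
namespace APMrec
open Finset Equiv

variable {n l r : ℕ}

open scoped Classical in
lemma threshold {K : ℕ} (P : Fin K → Prop)
    (hdown : ∀ a b : Fin K, a ≤ b → P b → P a) :
    ∃ a : ℕ, a ≤ K ∧ ∀ j : Fin K, (P j ↔ j.val < a) := by
  classical
  refine ⟨(Finset.univ.filter P).card, by
    simpa using Finset.card_le_univ (Finset.univ.filter P), fun j => ?_⟩
  constructor
  · intro hPj
    have hsub : Finset.Iic j ⊆ Finset.univ.filter P := by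
      intro x hx
      rw [Finset.mem_Iic] at hx
      simp only [Finset.mem_filter, Finset.mem_univ, true_and]
      exact hdown x j hx hPj
    have := Finset.card_le_card hsub
    rw [Fin.card_Iic] at this
    omega
  · intro hlt
    by_contra hPj
    have hsub : Finset.univ.filter P ⊆ Finset.Iio j := by
      intro x hx
      simp only [Finset.mem_filter, Finset.mem_univ, true_and] at hx
      rw [Finset.mem_Iio]
      by_contra hxj
      exact hPj (hdown j x (le_of_not_gt hxj) hx)
    have := Finset.card_le_card hsub
    rw [Fin.card_Iio] at this
    omega

lemma eL_strictMono (hn : n = l + 1 + r) :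
    StrictMono (fun x : Fin l => (⟨x.val, by have := x.isLt; omega⟩ : Fin n)) := by
  intro x y hxy
  rw [Fin.lt_def] at hxy ⊢
  simp only [Fin.val_mk]
  exact hxy

lemma eR_strictMono (hn : n = l + 1 + r) :
    StrictMono (fun x : Fin r => (⟨l + 1 + x.val, by have := x.isLt; omega⟩ : Fin n)) := by
  intro x y hxy
  rw [Fin.lt_def] at hxy ⊢
  simp only [Fin.val_mk]
  omega

lemma eL_compat (hn : n = l + 1 + r) (α : Equiv.Perm (Fin l)) (β : Equiv.Perm (Fin r)) :
    ∀ i i' : Fin l, α i < α i' ↔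
      gperm hn α β ((fun x : Fin l => (⟨x.val, by have := x.isLt; omega⟩ : Fin n)) i) <
      gperm hn α β ((fun x : Fin l => (⟨x.val, by have := x.isLt; omega⟩ : Fin n)) i') := by
  intro i i'
  simp only [Fin.lt_def]
  rw [gperm_left2 hn α β (j := i) rfl, gperm_left2 hn α β (j := i') rfl]

lemma eR_compat (hn : n = l + 1 + r) (α : Equiv.Perm (Fin l)) (β : Equiv.Perm (Fin r)) :
    ∀ i i' : Fin r, β i < β i' ↔
      gperm hn α β ((fun x : Fin r => (⟨l + 1 + x.val, by have := x.isLt; omega⟩ : Fin n)) i) <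
      gperm hn α β ((fun x : Fin r => (⟨l + 1 + x.val, by have := x.isLt; omega⟩ : Fin n)) i') := by
  intro i i'
  simp only [Fin.lt_def]
  rw [gperm_right2 hn α β (j := i) rfl, gperm_right2 hn α β (j := i') rfl]
  omega

lemma extract_left (hn : n = l + 1 + r) (α : Equiv.Perm (Fin l)) (β : Equiv.Perm (Fin r))
    {K : ℕ} {G : Fin K → Fin n} (hw : Wit (gperm hn α β) G)
    (hall : ∀ j, (G j).val < l) : ∃ g : Fin K → Fin l, Wit α g := by
  refine ⟨fun j => ⟨(G j).val, hall j⟩, ?_⟩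
  rw [wit_comp_iff (eL_strictMono hn) (eL_compat hn α β)]
  have : (fun x : Fin l => (⟨x.val, by have := x.isLt; omega⟩ : Fin n)) ∘
      (fun j => (⟨(G j).val, hall j⟩ : Fin l)) = G := funext fun j => Fin.ext rfl
  rw [this]
  exact hw

lemma extract_right (hn : n = l + 1 + r) (α : Equiv.Perm (Fin l)) (β : Equiv.Perm (Fin r))
    {K : ℕ} {G : Fin K → Fin n} (hw : Wit (gperm hn α β) G)
    (hall : ∀ j, l < (G j).val) : ∃ g : Fin K → Fin r, Wit β g := by
  refine ⟨fun j => ⟨(G j).val - (l + 1), by have := (G j).isLt; have := hall j; omega⟩, ?_⟩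
  rw [wit_comp_iff (eR_strictMono hn) (eR_compat hn α β)]
  have : (fun x : Fin r => (⟨l + 1 + x.val, by have := x.isLt; omega⟩ : Fin n)) ∘
      (fun j => (⟨(G j).val - (l + 1), by have := (G j).isLt; have := hall j; omega⟩ : Fin r)) = G := by
    funext j
    refine Fin.ext ?_
    simp only [Function.comp_apply, Fin.val_mk]
    have := hall j
    omega
  rw [this]
  exact hw

lemma insert_left (hn : n = l + 1 + r) (α : Equiv.Perm (Fin l)) (β : Equiv.Perm (Fin r))
    {K : ℕ} {g : Fin K → Fin l} (hw : Wit α g) :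
    ∃ G : Fin K → Fin n, Wit (gperm hn α β) G := by
  exact ⟨_, (wit_comp_iff (eL_strictMono hn) (eL_compat hn α β) g).mp hw⟩

lemma insert_right (hn : n = l + 1 + r) (α : Equiv.Perm (Fin l)) (β : Equiv.Perm (Fin r))
    {K : ℕ} {g : Fin K → Fin r} (hw : Wit β g) :
    ∃ G : Fin K → Fin n, Wit (gperm hn α β) G := by
  exact ⟨_, (wit_comp_iff (eR_strictMono hn) (eR_compat hn α β) g).mp hw⟩

/-- Value bounds for the glued permutation. -/
lemma gperm_val_low (hn : n = l + 1 + r) (α : Equiv.Perm (Fin l)) (β : Equiv.Perm (Fin r))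
    {i : Fin n} (hi : i.val < l) : (gperm hn α β i).val < l := by
  rw [gperm_left2 hn α β (j := ⟨i.val, hi⟩) rfl]
  exact (α _).isLt

lemma gperm_val_ge (hn : n = l + 1 + r) (α : Equiv.Perm (Fin l)) (β : Equiv.Perm (Fin r))
    {i : Fin n} (hi : l ≤ i.val) : l ≤ (gperm hn α β i).val := by
  rcases Nat.eq_or_lt_of_le hi with h | h
  · rw [gperm_mid hn α β h.symm]; omega
  · rw [gperm_right2 hn α β (j := ⟨i.val - (l+1), by have := i.isLt; omega⟩)
      (by simp only [Fin.val_mk]; omega)]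
    omega

lemma gperm_val_lt_high (hn : n = l + 1 + r) (α : Equiv.Perm (Fin l)) (β : Equiv.Perm (Fin r))
    {i : Fin n} (hi : l < i.val) : (gperm hn α β i).val < l + r := by
  rw [gperm_right2 hn α β (j := ⟨i.val - (l+1), by have := i.isLt; omega⟩)
    (by simp only [Fin.val_mk]; omega)]
  have := (β (⟨i.val - (l+1), by have := i.isLt; omega⟩ : Fin r)).isLt
  omega

set_option maxHeartbeats 1600000 in
/-- The core decomposition of a witness in the glued permutation. -/
lemma core (hn : n = l + 1 + r) (α : Equiv.Perm (Fin l)) (β : Equiv.Perm (Fin r))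
    {K : ℕ} (hK : K ∈ W (gperm hn α β)) :
    K = 1 ∨ K ∈ W α ∨ K ∈ W β ∨
      (∃ a t, K = a + 1 + t ∧ a ∈ W α ∧ t ∈ W β) := by
  obtain ⟨hodd, F, hsm, hd⟩ := hK
  rcases Nat.lt_or_ge K 3 with hK3 | hK3
  · left
    simp only [Nat.odd_iff] at hodd
    omega
  right
  -- threshold
  obtain ⟨a, haK, hiff⟩ := threshold (fun j => (F j).val < l)
    (fun x y hxy hPy => lt_of_le_of_lt (by
      rcases Nat.eq_or_lt_of_le (Fin.le_def.mp hxy) with h | h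
      · exact le_of_eq (congrArg (fun z => (F z).val) (Fin.ext h))
      · exact le_of_lt (Fin.lt_def.mp (hsm (Fin.lt_def.mpr h)))) hPy)
  rcases Nat.eq_or_lt_of_le haK with haK' | haK'
  · -- all in the left block
    left
    refine ⟨hodd, ?_⟩
    exact extract_left hn α β ⟨hsm, hd⟩ (fun j => (hiff j).mpr (by have := j.isLt; omega))
  rcases Nat.eq_zero_or_pos a with ha0 | ha0
  · -- none in the left block: all in the right block
    right; left
    have h0 : l < (F ⟨0, by omega⟩).val := by
      have hnP : ¬ (F ⟨0, by omega⟩).val < l := by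
        rw [hiff]; simp only [Fin.val_mk]; omega
      rcases Nat.eq_or_lt_of_le (le_of_not_gt hnP) with h | h
      · exfalso
        have hasc := (hd 0 (by omega)).mpr Even.zero
        rw [Fin.lt_def] at hasc
        rw [gperm_mid hn α β h.symm] at hasc
        have := (gperm hn α β (F ⟨1, by omega⟩)).isLt
        omega
      · exact h
    refine ⟨hodd, ?_⟩
    refine extract_right hn α β ⟨hsm, hd⟩ (fun j => lt_of_lt_of_le h0 ?_)
    have : (⟨0, by omega⟩ : Fin K) ≤ j := by simp [Fin.le_def]
    exact Fin.le_def.mp (hsm.monotone this)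
  · -- split case
    right; right
    -- a is odd
    have hstep := hd (a - 1) (by omega)
    have hidx : (⟨a - 1 + 1, by omega⟩ : Fin K) = ⟨a, by omega⟩ :=
      Fin.ext (by simp only [Fin.val_mk]; omega)
    rw [hidx] at hstep
    have hPa1 : (F ⟨a - 1, by omega⟩).val < l := (hiff _).mpr (by simp only [Fin.val_mk]; omega)
    have hnPa : ¬ (F ⟨a, by omega⟩).val < l := by
      rw [hiff]; simp only [Fin.val_mk]; omega
    have hasc : gperm hn α β (F ⟨a - 1, by omega⟩) < gperm hn α β (F ⟨a, by omega⟩) := by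
      rw [Fin.lt_def]
      have h1 := gperm_val_low hn α β hPa1
      have h2 := gperm_val_ge hn α β (le_of_not_gt hnPa)
      omega
    have haodd : a % 2 = 1 := by
      have := hstep.mp hasc
      simp only [Nat.even_iff] at this
      omega
    -- left part
    have hwinit : Wit (gperm hn α β) (fun j : Fin a => F ⟨j.val, by have := j.isLt; omega⟩) := by
      constructor
      · intro x y hxy
        exact hsm (by simp only [Fin.lt_def, Fin.val_mk]; exact Fin.lt_def.mp hxy)
      · intro j h
        exact hd j (by omega)
    obtain ⟨gl, hgl⟩ := extract_left hn α β hwinit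
      (fun j => (hiff _).mpr (by simp only [Fin.val_mk]; have := j.isLt; omega))
    -- tail part
    have htodd : Odd (K - (a + 1)) := by simp only [Nat.odd_iff] at hodd ⊢; omega
    have hwtail : Wit (gperm hn α β)
        (fun j : Fin (K - (a + 1)) => F ⟨a + 1 + j.val, by have := j.isLt; omega⟩) := by
      constructor
      · intro x y hxy
        exact hsm (by simp only [Fin.lt_def, Fin.val_mk]
                      have := Fin.lt_def.mp hxy; omega)
      · intro j h
        have hs := hd (a + 1 + j) (by omega)
        have hpar : Even (a + 1 + j) ↔ Even j := by
          simp only [Nat.even_iff]; omega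
        exact hs.trans hpar
    obtain ⟨gr, hgr⟩ := extract_right hn α β hwtail (fun j => by
      have hFa : l ≤ (F ⟨a, by omega⟩).val := le_of_not_gt hnPa
      have : F ⟨a, by omega⟩ < F ⟨a + 1 + j.val, by have := j.isLt; omega⟩ :=
        hsm (by simp only [Fin.lt_def, Fin.val_mk]; omega)
      rw [Fin.lt_def] at this
      omega)
    exact ⟨a, K - (a + 1), by omega, ⟨by simp only [Nat.odd_iff]; omega, gl, hgl⟩,
      ⟨htodd, gr, hgr⟩⟩

end APMrec
namespace APMrec
open Finset Equiv

variable {n l r ka kb : ℕ}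

def gwitF (hn : n = l + 1 + r) (ga : Fin ka → Fin l) (gb : Fin kb → Fin r) :
    Fin (ka + 1 + kb) → Fin n := fun j =>
  if h : j.val < ka then ⟨(ga ⟨j.val, h⟩).val, by have := (ga ⟨j.val, h⟩).isLt; omega⟩
  else if h2 : j.val = ka then ⟨l, by omega⟩
  else ⟨l + 1 + (gb ⟨j.val - (ka + 1), by have := j.isLt; omega⟩).val,
        by have := (gb ⟨j.val - (ka + 1), by have := j.isLt; omega⟩).isLt; omega⟩

lemma gwitF_left (hn : n = l + 1 + r) (ga : Fin ka → Fin l) (gb : Fin kb → Fin r)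
    {x : Fin (ka + 1 + kb)} (hx : x.val < ka) :
    (gwitF hn ga gb x).val = (ga ⟨x.val, hx⟩).val := by
  rw [gwitF, dif_pos hx]

lemma gwitF_left2 (hn : n = l + 1 + r) (ga : Fin ka → Fin l) (gb : Fin kb → Fin r)
    {x : Fin (ka + 1 + kb)} {j : Fin ka} (hij : x.val = j.val) :
    (gwitF hn ga gb x).val = (ga j).val := by
  have hx : x.val < ka := by have := j.isLt; omega
  rw [gwitF_left hn ga gb hx]
  have : (⟨x.val, hx⟩ : Fin ka) = j := Fin.ext (by simp only [Fin.val_mk]; omega)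
  rw [this]

lemma gwitF_mid (hn : n = l + 1 + r) (ga : Fin ka → Fin l) (gb : Fin kb → Fin r)
    {x : Fin (ka + 1 + kb)} (hx : x.val = ka) :
    (gwitF hn ga gb x).val = l := by
  rw [gwitF, dif_neg (by omega), dif_pos hx]

lemma gwitF_right (hn : n = l + 1 + r) (ga : Fin ka → Fin l) (gb : Fin kb → Fin r)
    {x : Fin (ka + 1 + kb)} (hx : ka < x.val) :
    (gwitF hn ga gb x).val
      = l + 1 + (gb ⟨x.val - (ka + 1), by have := x.isLt; omega⟩).val := by
  rw [gwitF, dif_neg (by omega), dif_neg (by omega)]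

lemma gwitF_right2 (hn : n = l + 1 + r) (ga : Fin ka → Fin l) (gb : Fin kb → Fin r)
    {x : Fin (ka + 1 + kb)} {j : Fin kb} (hij : x.val = ka + 1 + j.val) :
    (gwitF hn ga gb x).val = l + 1 + (gb j).val := by
  rw [gwitF_right hn ga gb (by omega)]
  have : (⟨x.val - (ka + 1), by have := x.isLt; omega⟩ : Fin kb) = j :=
    Fin.ext (by simp only [Fin.val_mk]; omega)
  rw [this]

lemma glue_wit (hn : n = l + 1 + r) (α : Equiv.Perm (Fin l)) (β : Equiv.Perm (Fin r))
    {ga : Fin ka → Fin l} {gb : Fin kb → Fin r}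
    (ha : Wit α ga) (hb : Wit β gb) (hka : Odd ka) (hkb : Odd kb) :
    (ka + 1 + kb) ∈ W (gperm hn α β) := by
  have hsva : ∀ (x : Fin (ka + 1 + kb)) (j : Fin ka), x.val = j.val →
      ((gperm hn α β) (gwitF hn ga gb x)).val = (α (ga j)).val := by
    intro x j hij
    exact gperm_left2 hn α β (gwitF_left2 hn ga gb hij)
  have hsvm : ∀ (x : Fin (ka + 1 + kb)), x.val = ka →
      ((gperm hn α β) (gwitF hn ga gb x)).val = l + r := by
    intro x hx
    exact gperm_mid hn α β (gwitF_mid hn ga gb hx)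
  have hsvb : ∀ (x : Fin (ka + 1 + kb)) (j : Fin kb), x.val = ka + 1 + j.val →
      ((gperm hn α β) (gwitF hn ga gb x)).val = l + (β (gb j)).val := by
    intro x j hij
    exact gperm_right2 hn α β (gwitF_right2 hn ga gb hij)
  refine ⟨by simp only [Nat.odd_iff] at hka hkb ⊢; omega, gwitF hn ga gb, ?_, ?_⟩
  · -- strict monotonicity
    intro x y hxy
    rw [Fin.lt_def] at hxy ⊢
    rcases Nat.lt_trichotomy x.val ka with hx | hx | hx
    · rw [gwitF_left hn ga gb hx]
      rcases Nat.lt_trichotomy y.val ka with hy | hy | hy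
      · rw [gwitF_left hn ga gb hy]
        have := ha.1 (show (⟨x.val, hx⟩ : Fin ka) < ⟨y.val, hy⟩ from Fin.mk_lt_mk.mpr hxy)
        exact Fin.lt_def.mp this
      · rw [gwitF_mid hn ga gb hy]
        exact (ga _).isLt
      · rw [gwitF_right hn ga gb hy]
        have := (ga (⟨x.val, hx⟩ : Fin ka)).isLt
        omega
    · rw [gwitF_mid hn ga gb hx]
      have hy : ka < y.val := by omega
      rw [gwitF_right hn ga gb hy]
      omega
    · have hy : ka < y.val := by omega
      rw [gwitF_right hn ga gb hx, gwitF_right hn ga gb hy]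
      have := hb.1 (show (⟨x.val - (ka+1), by have := x.isLt; omega⟩ : Fin kb)
          < ⟨y.val - (ka+1), by have := y.isLt; omega⟩ from Fin.mk_lt_mk.mpr (by omega))
      have := Fin.lt_def.mp this
      omega
  · -- direction property
    intro j h
    rw [Fin.lt_def]
    rcases Nat.lt_trichotomy (j + 1) ka with hj | hj | hj
    · rw [hsva ⟨j, by omega⟩ ⟨j, by omega⟩ rfl, hsva ⟨j+1, h⟩ ⟨j+1, hj⟩ rfl]
      have := ha.2 j hj
      rw [Fin.lt_def] at this
      exact this
    · rw [hsva ⟨j, by omega⟩ ⟨j, by omega⟩ rfl, hsvm ⟨j+1, h⟩ (by simp only [Fin.val_mk]; omega)]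
      refine iff_of_true (lt_of_lt_of_le (Fin.isLt _) (Nat.le_add_right l r)) ?_
      rcases hka with ⟨m, hm⟩
      exact ⟨m, by omega⟩
    · rcases Nat.eq_or_lt_of_le (Nat.succ_le_of_lt hj) with hj' | hj'
      · -- j = ka
        rw [hsvm ⟨j, by omega⟩ (by simp only [Fin.val_mk]; omega),
          hsvb ⟨j+1, h⟩ ⟨0, by omega⟩ (by simp only [Fin.val_mk]; omega)]
        refine iff_of_false (not_lt.mpr (Nat.add_le_add_left (Nat.le_of_lt (Fin.isLt _)) l)) ?_
        rcases hka with ⟨m, hm⟩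
        simp only [Nat.even_iff]
        omega
      · -- j > ka
        rw [hsvb ⟨j, by omega⟩ ⟨j - (ka+1), by omega⟩ (by simp only [Fin.val_mk]; omega),
          hsvb ⟨j+1, h⟩ ⟨j - (ka+1) + 1, by omega⟩ (by simp only [Fin.val_mk]; omega)]
        rw [Nat.add_lt_add_iff_left]
        have hstep := hb.2 (j - (ka+1)) (by omega)
        rw [Fin.lt_def] at hstep
        have hpar : Even (j - (ka+1)) ↔ Even j := by
          simp only [Nat.even_iff]
          rcases hka with ⟨m, hm⟩
          omega
        exact hstep.trans hpar

lemma W_zero_empty {α : Equiv.Perm (Fin 0)} {k : ℕ} (h : k ∈ W α) : False := by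
  obtain ⟨hodd, g, hw⟩ := h
  have := strictMono_le_card hw.1
  simp only [Nat.odd_iff] at hodd
  omega

lemma apm_gperm_left0 {n r : ℕ} (hn : n = 0 + 1 + r) (hr : r ≠ 0)
    (α : Equiv.Perm (Fin 0)) (β : Equiv.Perm (Fin r)) :
    apm (gperm hn α β) = apm β := by
  have hn0 : n ≠ 0 := by omega
  apply le_antisymm
  · rcases core hn α β (apm_mem_W (gperm hn α β) hn0) with h1 | h2 | h3 | h4
    · rw [h1]; exact one_le_apm β hr
    · exact absurd h2 (fun h => W_zero_empty h)
    · exact le_apm_of_mem_W hr h3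
    · obtain ⟨a, t, _, haW, _⟩ := h4
      exact absurd haW (fun h => W_zero_empty h)
  · obtain ⟨hoddβ, wβ, hwβ⟩ := apm_mem_W β hr
    obtain ⟨G, hG⟩ := insert_right hn α β hwβ
    exact le_apm_of_mem_W hn0 ⟨hoddβ, G, hG⟩

lemma apm_gperm_right0 {n l : ℕ} (hn : n = l + 1 + 0) (hl : l ≠ 0)
    (α : Equiv.Perm (Fin l)) (β : Equiv.Perm (Fin 0)) :
    apm (gperm hn α β) = apm α := by
  have hn0 : n ≠ 0 := by omega
  apply le_antisymm
  · rcases core hn α β (apm_mem_W (gperm hn α β) hn0) with h1 | h2 | h3 | h4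
    · rw [h1]; exact one_le_apm α hl
    · exact le_apm_of_mem_W hl h2
    · exact absurd h3 (fun h => W_zero_empty h)
    · obtain ⟨a, t, _, _, htW⟩ := h4
      exact absurd htW (fun h => W_zero_empty h)
  · obtain ⟨hoddα, wα, hwα⟩ := apm_mem_W α hl
    obtain ⟨G, hG⟩ := insert_left hn α β hwα
    exact le_apm_of_mem_W hn0 ⟨hoddα, G, hG⟩

lemma apm_gperm_mid (hn : n = l + 1 + r) (hl : l ≠ 0) (hr : r ≠ 0)
    (α : Equiv.Perm (Fin l)) (β : Equiv.Perm (Fin r)) :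
    apm (gperm hn α β) = apm α + apm β + 1 := by
  have hn0 : n ≠ 0 := by omega
  have h1α := one_le_apm α hl
  have h1β := one_le_apm β hr
  apply le_antisymm
  · rcases core hn α β (apm_mem_W (gperm hn α β) hn0) with h1 | h2 | h3 | h4
    · omega
    · have := le_apm_of_mem_W hl h2
      omega
    · have := le_apm_of_mem_W hr h3
      omega
    · obtain ⟨a, t, hK, haW, htW⟩ := h4
      have := le_apm_of_mem_W hl haW
      have := le_apm_of_mem_W hr htW
      omega
  · obtain ⟨hoddα, wα, hwα⟩ := apm_mem_W α hl
    obtain ⟨hoddβ, wβ, hwβ⟩ := apm_mem_W β hr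
    have := le_apm_of_mem_W hn0 (glue_wit hn α β hwα hwβ hoddα hoddβ)
    omega

end APMrec
namespace APMrec
open Finset Equiv

variable {n l r : ℕ}

open scoped Classical in
lemma card_val_lt (n c : ℕ) (h : c ≤ n) :
    (Finset.univ.filter (fun v : Fin n => v.val < c)).card = c := by
  classical
  have hset : Finset.univ.filter (fun v : Fin n => v.val < c)
      = Finset.univ.map (Fin.castLEEmb h) := by
    ext v
    simp only [Finset.mem_filter, Finset.mem_univ, true_and, Finset.mem_map]
    constructor
    · intro hv
      exact ⟨⟨v.val, hv⟩, Fin.ext rfl⟩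
    · rintro ⟨a, rfl⟩
      exact a.isLt
  rw [hset, Finset.card_map, Finset.card_univ, Fintype.card_fin]

lemma avoids_val_low (hn : n = l + 1 + r) {σ : Equiv.Perm (Fin n)} (hA : Avoids231 σ)
    (htop : (σ ⟨l, by omega⟩).val = l + r) :
    ∀ i : Fin n, i.val < l → (σ i).val < l := by
  classical
  intro i hi
  by_contra hge
  push_neg at hge
  have hine : (σ i).val ≠ l + r := by
    intro he
    have h1 : σ i = σ ⟨l, by omega⟩ := Fin.ext (by rw [he, htop])
    have h2 := congrArg Fin.val (σ.injective h1)
    simp only [Fin.val_mk] at h2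
    omega
  have hex : ∃ v : Fin n, v.val < (σ i).val ∧ l < (σ.symm v).val := by
    by_contra hc
    push_neg at hc
    have hmaps : ∀ v ∈ Finset.univ.filter (fun v : Fin n => v.val < (σ i).val),
        σ.symm v ∈ (Finset.univ.filter (fun q : Fin n => q.val < l)).erase i := by
      intro v hv
      simp only [Finset.mem_filter, Finset.mem_univ, true_and] at hv
      have h1 := hc v hv
      have h3 : (σ.symm v).val ≠ l := by
        intro he
        have : σ.symm v = ⟨l, by omega⟩ := Fin.ext (by simp only [Fin.val_mk]; exact he)
        have hv2 : v = σ ⟨l, by omega⟩ := by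
          rw [← this, Equiv.apply_symm_apply]
        have := congrArg Fin.val hv2
        have := (σ i).isLt
        omega
      have h4 : σ.symm v ≠ i := by
        intro he
        have hv2 : v = σ i := by rw [← he, Equiv.apply_symm_apply]
        rw [hv2] at hv
        omega
      refine Finset.mem_erase.mpr ⟨h4, ?_⟩
      simp only [Finset.mem_filter, Finset.mem_univ, true_and]
      omega
    have hinj : Set.InjOn (fun v => σ.symm v) ↑(Finset.univ.filter (fun v : Fin n => v.val < (σ i).val)) :=
      fun a _ b _ hab => σ.symm.injective hab
    have hcard := Finset.card_le_card_of_injOn _ hmaps hinj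
    rw [card_val_lt n ((σ i).val) (le_of_lt (σ i).isLt)] at hcard
    have hce : ((Finset.univ.filter (fun q : Fin n => q.val < l)).erase i).card = l - 1 := by
      rw [Finset.card_erase_of_mem (by
        simp only [Finset.mem_filter, Finset.mem_univ, true_and]; exact hi),
        card_val_lt n l (by omega)]
    omega
  obtain ⟨v, hv1, hv2⟩ := hex
  refine hA ⟨i, ⟨l, by omega⟩, σ.symm v, ?_, ?_, ?_, ?_⟩
  · rw [Fin.lt_def]; simp only [Fin.val_mk]; omega
  · rw [Fin.lt_def]; simp only [Fin.val_mk]; omega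
  · rw [Fin.lt_def, Equiv.apply_symm_apply]
    exact hv1
  · rw [Fin.lt_def, htop]
    have := (σ i).isLt
    omega

lemma avoids_val_high (hn : n = l + 1 + r) {σ : Equiv.Perm (Fin n)} (hA : Avoids231 σ)
    (htop : (σ ⟨l, by omega⟩).val = l + r) :
    ∀ i : Fin n, l < i.val → l ≤ (σ i).val ∧ (σ i).val < l + r := by
  classical
  intro i hi
  constructor
  · by_contra hlt
    push_neg at hlt
    have himg : Finset.image σ (Finset.univ.filter (fun q : Fin n => q.val < l))
        = Finset.univ.filter (fun v : Fin n => v.val < l) := by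
      apply Finset.eq_of_subset_of_card_le
      · intro v hv
        simp only [Finset.mem_image] at hv
        obtain ⟨q, hq, rfl⟩ := hv
        simp only [Finset.mem_filter, Finset.mem_univ, true_and] at hq ⊢
        exact avoids_val_low hn hA htop q hq
      · rw [Finset.card_image_of_injective _ σ.injective, card_val_lt n l (by omega)]
    have hmem : σ i ∈ Finset.univ.filter (fun v : Fin n => v.val < l) := by
      simp only [Finset.mem_filter, Finset.mem_univ, true_and]
      exact hlt
    rw [← himg, Finset.mem_image] at hmem
    obtain ⟨q, hq, hqe⟩ := hmem
    have := σ.injective hqe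
    simp only [Finset.mem_filter, Finset.mem_univ, true_and] at hq
    omega
  · have hine : (σ i).val ≠ l + r := by
      intro he
      have h1 : σ i = σ ⟨l, by omega⟩ := Fin.ext (by rw [he, htop])
      have h2 := congrArg Fin.val (σ.injective h1)
      simp only [Fin.val_mk] at h2
      omega
    have := (σ i).isLt
    omega

noncomputable def extractL (hn : n = l + 1 + r) (σ : Equiv.Perm (Fin n))
    (h : ∀ i : Fin n, i.val < l → (σ i).val < l) : Equiv.Perm (Fin l) :=
  Equiv.ofBijective (fun j : Fin l =>
      (⟨(σ ⟨j.val, by omega⟩).val, h _ j.isLt⟩ : Fin l))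
    (Finite.injective_iff_bijective.mp (by
      intro a b hab
      have h1 : (σ ⟨a.val, by omega⟩).val = (σ ⟨b.val, by omega⟩).val := by
        have := congrArg Fin.val hab
        simpa only [Fin.val_mk] using this
      have h2 := σ.injective (Fin.ext h1)
      have := congrArg Fin.val h2
      simp only [Fin.val_mk] at this
      exact Fin.ext this))

noncomputable def extractR (hn : n = l + 1 + r) (σ : Equiv.Perm (Fin n))
    (h : ∀ i : Fin n, l < i.val → l ≤ (σ i).val ∧ (σ i).val < l + r) : Equiv.Perm (Fin r) :=
  Equiv.ofBijective (fun j : Fin r =>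
      (⟨(σ ⟨l + 1 + j.val, by omega⟩).val - l,
        by have := h ⟨l + 1 + j.val, by omega⟩ (by simp only [Fin.val_mk]; omega); omega⟩ : Fin r))
    (Finite.injective_iff_bijective.mp (by
      intro a b hab
      have hta := h ⟨l + 1 + a.val, by omega⟩ (by simp only [Fin.val_mk]; omega)
      have htb := h ⟨l + 1 + b.val, by omega⟩ (by simp only [Fin.val_mk]; omega)
      have h1 : (σ ⟨l + 1 + a.val, by omega⟩).val = (σ ⟨l + 1 + b.val, by omega⟩).val := by
        have := congrArg Fin.val hab
        simp only [Fin.val_mk] at this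
        omega
      have h2 := σ.injective (Fin.ext h1)
      have := congrArg Fin.val h2
      simp only [Fin.val_mk] at this
      exact Fin.ext (by omega)))

lemma extractL_val (hn : n = l + 1 + r) (σ : Equiv.Perm (Fin n))
    (h : ∀ i : Fin n, i.val < l → (σ i).val < l) {j : Fin l} {i : Fin n}
    (hij : i.val = j.val) : (extractL hn σ h j).val = (σ i).val := by
  rw [extractL, Equiv.ofBijective_apply]
  simp only [Fin.val_mk]
  have : (⟨j.val, by omega⟩ : Fin n) = i := Fin.ext (by simp only [Fin.val_mk]; omega)
  rw [this]

lemma extractR_val (hn : n = l + 1 + r) (σ : Equiv.Perm (Fin n))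
    (h : ∀ i : Fin n, l < i.val → l ≤ (σ i).val ∧ (σ i).val < l + r) {j : Fin r} {i : Fin n}
    (hij : i.val = l + 1 + j.val) : (extractR hn σ h j).val = (σ i).val - l := by
  rw [extractR, Equiv.ofBijective_apply]
  simp only [Fin.val_mk]
  have : (⟨l + 1 + j.val, by omega⟩ : Fin n) = i := Fin.ext (by simp only [Fin.val_mk]; omega)
  rw [this]

lemma gperm_extract (hn : n = l + 1 + r) (σ : Equiv.Perm (Fin n))
    (hlow : ∀ i : Fin n, i.val < l → (σ i).val < l)
    (hhigh : ∀ i : Fin n, l < i.val → l ≤ (σ i).val ∧ (σ i).val < l + r)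
    (htop : (σ ⟨l, by omega⟩).val = l + r) :
    gperm hn (extractL hn σ hlow) (extractR hn σ hhigh) = σ := by
  apply Equiv.ext
  intro i
  apply Fin.ext
  rcases Nat.lt_trichotomy i.val l with hi | hi | hi
  · rw [gperm_left2 hn _ _ (j := (⟨i.val, hi⟩ : Fin l)) rfl]
    exact extractL_val hn σ hlow rfl
  · rw [gperm_mid hn _ _ hi]
    have : (⟨l, by omega⟩ : Fin n) = i := Fin.ext (by simp only [Fin.val_mk]; omega)
    rw [← this, htop]
  · rw [gperm_right2 hn _ _ (j := (⟨i.val - (l + 1), by have := i.isLt; omega⟩ : Fin r))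
      (by simp only [Fin.val_mk]; omega)]
    rw [extractR_val hn σ hhigh (i := i) (by simp only [Fin.val_mk]; omega)]
    have := (hhigh i hi).1
    omega

lemma extractL_gperm (hn : n = l + 1 + r) (α : Equiv.Perm (Fin l)) (β : Equiv.Perm (Fin r))
    (hlow : ∀ i : Fin n, i.val < l → ((gperm hn α β) i).val < l) :
    extractL hn (gperm hn α β) hlow = α := by
  apply Equiv.ext
  intro j
  apply Fin.ext
  rw [extractL_val hn _ hlow (i := ⟨j.val, by omega⟩) rfl]
  exact gperm_left2 hn α β rfl

lemma extractR_gperm (hn : n = l + 1 + r) (α : Equiv.Perm (Fin l)) (β : Equiv.Perm (Fin r))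
    (hhigh : ∀ i : Fin n, l < i.val → l ≤ ((gperm hn α β) i).val ∧ ((gperm hn α β) i).val < l + r) :
    extractR hn (gperm hn α β) hhigh = β := by
  apply Equiv.ext
  intro j
  apply Fin.ext
  rw [extractR_val hn _ hhigh (i := ⟨l + 1 + j.val, by omega⟩) (by simp only [Fin.val_mk])]
  rw [gperm_right2 hn α β (j := j) (by simp only [Fin.val_mk])]
  omega

end APMrec
namespace APMrec
open Finset Equiv

open scoped Classical in
noncomputable def S (m : ℕ) (lam : ℝ) : ℝ :=
  ∑ σ ∈ Finset.univ.filter (fun σ : Equiv.Perm (Fin m) => Avoids231 σ),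
    Real.exp (lam * apm σ)

lemma catalan_ne_zero (m : ℕ) : (catalan m : ℝ) ≠ 0 := by
  have h2 := succ_mul_catalan_eq_centralBinom m
  have h1 := Nat.centralBinom_pos m
  have : catalan m ≠ 0 := by
    intro h
    rw [h, Nat.mul_zero] at h2
    omega
  exact_mod_cast this

lemma catalan_mul_Mapm (m : ℕ) (lam : ℝ) :
    (catalan m : ℝ) * Mapm m lam = S m lam := by
  rw [Mapm, S, mul_comm, div_mul_cancel₀ _ (catalan_ne_zero m)]

lemma avoids231_fin0 (γ : Equiv.Perm (Fin 0)) : Avoids231 γ := by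
  rintro ⟨i, -⟩
  exact i.elim0

open scoped Classical in
lemma filter_fin0_eq : (Finset.univ.filter (fun γ : Equiv.Perm (Fin 0) => Avoids231 γ))
    = Finset.univ :=
  Finset.filter_true_of_mem (fun γ _ => avoids231_fin0 γ)

lemma card_perm_fin0 : Fintype.card (Equiv.Perm (Fin 0)) = 1 := by
  simp [Fintype.card_perm]

open scoped Classical in
lemma inner_sum (lam : ℝ) {n l r : ℕ} (hnl : n = l + 1 + r) (p : Fin n) (hp : p.val = l) :
    ∑ σ ∈ (Finset.univ.filter (fun σ : Equiv.Perm (Fin n) => Avoids231 σ)).filter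
        (fun σ => σ.symm ⟨n - 1, by omega⟩ = p), Real.exp (lam * apm σ)
      = ∑ α ∈ Finset.univ.filter (fun α : Equiv.Perm (Fin l) => Avoids231 α),
          ∑ β ∈ Finset.univ.filter (fun β : Equiv.Perm (Fin r) => Avoids231 β),
            Real.exp (lam * apm (gperm hnl α β)) := by
  classical
  rw [← Finset.sum_product']
  have hprops : ∀ σ ∈ (Finset.univ.filter (fun σ : Equiv.Perm (Fin n) => Avoids231 σ)).filter
      (fun σ => σ.symm ⟨n - 1, by omega⟩ = p),
      Avoids231 σ ∧ (σ ⟨l, by omega⟩).val = l + r := by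
    intro σ hσ
    have h1 := Finset.mem_filter.mp hσ
    have h2 := Finset.mem_filter.mp h1.1
    refine ⟨h2.2, ?_⟩
    have h3 := congrArg σ h1.2
    rw [Equiv.apply_symm_apply] at h3
    have hpl : (⟨l, by omega⟩ : Fin n) = p := Fin.ext (by simp only [Fin.val_mk]; omega)
    rw [hpl, ← h3]
    simp only [Fin.val_mk]
    omega
  refine Finset.sum_bij'
    (i := fun σ hσ => (extractL hnl σ (avoids_val_low hnl (hprops σ hσ).1 (hprops σ hσ).2),
      extractR hnl σ (avoids_val_high hnl (hprops σ hσ).1 (hprops σ hσ).2)))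
    (j := fun ab _ => gperm hnl ab.1 ab.2) ?_ ?_ ?_ ?_ ?_
  · -- i maps into the product
    intro σ hσ
    rw [Finset.mem_product]
    have hback := gperm_extract hnl σ (avoids_val_low hnl (hprops σ hσ).1 (hprops σ hσ).2)
      (avoids_val_high hnl (hprops σ hσ).1 (hprops σ hσ).2) (hprops σ hσ).2
    have hAv : Avoids231 (gperm hnl
        (extractL hnl σ (avoids_val_low hnl (hprops σ hσ).1 (hprops σ hσ).2))
        (extractR hnl σ (avoids_val_high hnl (hprops σ hσ).1 (hprops σ hσ).2))) := by
      rw [hback]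
      exact (hprops σ hσ).1
    have := (avoids_gperm_iff hnl _ _).mp hAv
    constructor
    · simp only [Finset.mem_filter, Finset.mem_univ, true_and]
      exact this.1
    · simp only [Finset.mem_filter, Finset.mem_univ, true_and]
      exact this.2
  · -- j maps into the fiber
    intro ab hab
    rw [Finset.mem_product] at hab
    simp only [Finset.mem_filter, Finset.mem_univ, true_and] at hab ⊢
    constructor
    · exact (avoids_gperm_iff hnl ab.1 ab.2).mpr ⟨hab.1, hab.2⟩
    · rw [Equiv.symm_apply_eq]
      apply Fin.ext
      rw [gperm_mid hnl ab.1 ab.2 hp]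
      simp only [Fin.val_mk]
      omega
  · -- left inverse
    intro σ hσ
    exact gperm_extract hnl σ (avoids_val_low hnl (hprops σ hσ).1 (hprops σ hσ).2)
      (avoids_val_high hnl (hprops σ hσ).1 (hprops σ hσ).2) (hprops σ hσ).2
  · -- right inverse
    intro ab hab
    refine Prod.ext ?_ ?_
    · exact extractL_gperm hnl ab.1 ab.2
        (fun i hi => gperm_val_low hnl ab.1 ab.2 hi)
    · exact extractR_gperm hnl ab.1 ab.2
        (fun i hi => ⟨gperm_val_ge hnl ab.1 ab.2 (le_of_lt hi), gperm_val_lt_high hnl ab.1 ab.2 hi⟩)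
  · -- value equality
    intro σ hσ
    rw [gperm_extract hnl σ (avoids_val_low hnl (hprops σ hσ).1 (hprops σ hσ).2)
      (avoids_val_high hnl (hprops σ hσ).1 (hprops σ hσ).2) (hprops σ hσ).2]

open scoped Classical in
lemma eval_left0 (lam : ℝ) {n l r : ℕ} (hnl : n = l + 1 + r) (hl : l = 0) (hr : r ≠ 0) :
    (∑ α ∈ Finset.univ.filter (fun α : Equiv.Perm (Fin l) => Avoids231 α),
      ∑ β ∈ Finset.univ.filter (fun β : Equiv.Perm (Fin r) => Avoids231 β),
        Real.exp (lam * apm (gperm hnl α β))) = S r lam := by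
  classical
  subst hl
  have hcongr : ∀ α ∈ Finset.univ.filter (fun α : Equiv.Perm (Fin 0) => Avoids231 α),
      (∑ β ∈ Finset.univ.filter (fun β : Equiv.Perm (Fin r) => Avoids231 β),
        Real.exp (lam * apm (gperm hnl α β))) = S r lam := by
    intro α _
    rw [S]
    apply Finset.sum_congr rfl
    intro β _
    rw [apm_gperm_left0 hnl hr α β]
  rw [Finset.sum_congr rfl hcongr, Finset.sum_const, filter_fin0_eq, Finset.card_univ,
    card_perm_fin0, one_smul]

open scoped Classical in
lemma eval_right0 (lam : ℝ) {n l r : ℕ} (hnl : n = l + 1 + r) (hl : l ≠ 0) (hr : r = 0) :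
    (∑ α ∈ Finset.univ.filter (fun α : Equiv.Perm (Fin l) => Avoids231 α),
      ∑ β ∈ Finset.univ.filter (fun β : Equiv.Perm (Fin r) => Avoids231 β),
        Real.exp (lam * apm (gperm hnl α β))) = S l lam := by
  classical
  subst hr
  have hcongr : ∀ α ∈ Finset.univ.filter (fun α : Equiv.Perm (Fin l) => Avoids231 α),
      (∑ β ∈ Finset.univ.filter (fun β : Equiv.Perm (Fin 0) => Avoids231 β),
        Real.exp (lam * apm (gperm hnl α β))) = Real.exp (lam * apm α) := by
    intro α _
    have : ∀ β ∈ Finset.univ.filter (fun β : Equiv.Perm (Fin 0) => Avoids231 β),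
        Real.exp (lam * apm (gperm hnl α β)) = Real.exp (lam * apm α) := by
      intro β _
      rw [apm_gperm_right0 hnl hl α β]
    rw [Finset.sum_congr rfl this, Finset.sum_const, filter_fin0_eq, Finset.card_univ,
      card_perm_fin0, one_smul]
  rw [Finset.sum_congr rfl hcongr, S]

open scoped Classical in
lemma eval_mid (lam : ℝ) {n l r : ℕ} (hnl : n = l + 1 + r) (hl : l ≠ 0) (hr : r ≠ 0) :
    (∑ α ∈ Finset.univ.filter (fun α : Equiv.Perm (Fin l) => Avoids231 α),
      ∑ β ∈ Finset.univ.filter (fun β : Equiv.Perm (Fin r) => Avoids231 β),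
        Real.exp (lam * apm (gperm hnl α β)))
      = Real.exp lam * S l lam * S r lam := by
  classical
  have hcongr : ∀ α ∈ Finset.univ.filter (fun α : Equiv.Perm (Fin l) => Avoids231 α),
      ∀ β ∈ Finset.univ.filter (fun β : Equiv.Perm (Fin r) => Avoids231 β),
      Real.exp (lam * apm (gperm hnl α β))
        = Real.exp (lam * apm α) * Real.exp (lam * apm β) * Real.exp lam := by
    intro α _ β _
    rw [apm_gperm_mid hnl hl hr α β]
    rw [← Real.exp_add, ← Real.exp_add]
    push_cast
    ring_nf
  rw [Finset.sum_congr rfl (fun α hα => Finset.sum_congr rfl (fun β hβ => hcongr α hα β hβ))]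
  rw [S, S]
  simp only [← Finset.sum_mul, ← Finset.mul_sum]
  ring

end APMrec
namespace APMrec
open Finset Equiv

open scoped Classical in
lemma S_rec (lam : ℝ) (m : ℕ) :
    S (m + 3) lam
      = Real.exp lam * ∑ j ∈ Finset.Icc 2 (m + 2), S (j - 1) lam * S (m + 3 - j) lam
      + 2 * S (m + 2) lam := by
  classical
  have hfib := Finset.sum_fiberwise_of_maps_to
    (s := Finset.univ.filter (fun σ : Equiv.Perm (Fin (m+3)) => Avoids231 σ))
    (t := (Finset.univ : Finset (Fin (m+3))))
    (g := fun σ => σ.symm ⟨m + 2, by omega⟩)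
    (fun σ _ => Finset.mem_univ _)
    (fun σ => Real.exp (lam * apm σ))
  have hterm : ∀ (v : ℕ) (p : Fin (m+3)), p.val = v →
      (∑ σ ∈ (Finset.univ.filter (fun σ : Equiv.Perm (Fin (m+3)) => Avoids231 σ)).filter
          (fun σ => σ.symm ⟨m + 2, by omega⟩ = p), Real.exp (lam * apm σ))
        = if v = 0 ∨ v = m + 2 then S (m + 2) lam
          else Real.exp lam * S v lam * S (m + 2 - v) lam := by
    intro v p hpv
    have hvlt : v < m + 3 := by have := p.isLt; omega
    have hnl : m + 3 = v + 1 + (m + 2 - v) := by omega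
    have hin := inner_sum lam hnl p hpv
    by_cases h0 : v = 0
    · subst h0
      rw [if_pos (Or.inl rfl)]
      exact hin.trans (eval_left0 lam hnl rfl (by omega))
    · by_cases h2 : v = m + 2
      · subst h2
        rw [if_pos (Or.inr rfl)]
        exact hin.trans (eval_right0 lam hnl (by omega) (by omega))
      · rw [if_neg (by omega)]
        exact hin.trans (eval_mid lam hnl h0 (by omega))
  rw [S, ← hfib]
  trans (∑ p : Fin (m+3), if p.val = 0 ∨ p.val = m+2 then S (m+2) lam
    else Real.exp lam * S p.val lam * S (m+2-p.val) lam)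
  · exact Finset.sum_congr rfl (fun p _ => hterm p.val p rfl)
  · rw [Fin.sum_univ_eq_sum_range (fun v => if v = 0 ∨ v = m+2 then S (m+2) lam
      else Real.exp lam * S v lam * S (m+2-v) lam) (m+3)]
    have hsplit : (∑ v ∈ Finset.range (m+3), (if v = 0 ∨ v = m+2 then S (m+2) lam
        else Real.exp lam * S v lam * S (m+2-v) lam))
        = (if (0:ℕ) = 0 ∨ (0:ℕ) = m+2 then S (m+2) lam
            else Real.exp lam * S 0 lam * S (m+2-0) lam)
          + (∑ i ∈ Finset.range (m+1), (if i+1 = 0 ∨ i+1 = m+2 then S (m+2) lam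
            else Real.exp lam * S (i+1) lam * S (m+2-(i+1)) lam))
          + (if m+2 = 0 ∨ m+2 = m+2 then S (m+2) lam
            else Real.exp lam * S (m+2) lam * S (m+2-(m+2)) lam) := by
      rw [Finset.sum_range_succ, Finset.sum_range_succ']
      ring
    rw [hsplit, if_pos (Or.inl rfl), if_pos (Or.inr rfl)]
    have hmid : (∑ i ∈ Finset.range (m+1), (if i+1 = 0 ∨ i+1 = m+2 then S (m+2) lam
        else Real.exp lam * S (i+1) lam * S (m+2-(i+1)) lam))
        = Real.exp lam * ∑ j ∈ Finset.Icc 2 (m + 2), S (j - 1) lam * S (m + 3 - j) lam := by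
      rw [Finset.mul_sum]
      refine Finset.sum_nbij' (fun a => a + 2) (fun a => a - 2) ?_ ?_ ?_ ?_ ?_
      · intro a ha
        rw [Finset.mem_range] at ha
        simp only [Finset.mem_Icc]
        omega
      · intro a ha
        rw [Finset.mem_Icc] at ha
        simp only [Finset.mem_range]
        omega
      · intro a _
        omega
      · intro a ha
        rw [Finset.mem_Icc] at ha
        omega
      · intro a ha
        rw [Finset.mem_range] at ha
        rw [if_neg (by omega)]
        have e1 : a + 2 - 1 = a + 1 := by omega
        have e2 : m + 3 - (a + 2) = m + 2 - (a + 1) := by omega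
        rw [e1, e2, mul_assoc]
    rw [hmid]
    ring
end APMrec


/-- The recursion for the moment generating function of `A^{+,-}_n` under the uniform
231-avoiding measure:
`Cₙ Mₙ(λ) = e^λ Σ_{j=2}^{n-1} C_{j-1}M_{j-1}(λ) C_{n-j}M_{n-j}(λ) + 2 C_{n-1}M_{n-1}(λ)`. -/
theorem catalan_mapm_recursion (lam : ℝ) (n : ℕ) (hn : 3 ≤ n) :
    (catalan n : ℝ) * Mapm n lam =
      Real.exp lam * ∑ j ∈ Finset.Icc 2 (n - 1),
        ((catalan (j - 1) : ℝ) * Mapm (j - 1) lam) * ((catalan (n - j) : ℝ) * Mapm (n - j) lam)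
      + 2 * ((catalan (n - 1) : ℝ) * Mapm (n - 1) lam) := by

  obtain ⟨m, rfl⟩ : ∃ m, n = m + 3 := ⟨n - 3, by omega⟩
  rw [show m + 3 - 1 = m + 2 from rfl]
  have hs : ∀ j ∈ Finset.Icc 2 (m + 2),
      ((catalan (j - 1) : ℝ) * Mapm (j - 1) lam) * ((catalan (m + 3 - j) : ℝ) * Mapm (m + 3 - j) lam)
        = APMrec.S (j - 1) lam * APMrec.S (m + 3 - j) lam := fun j _ => by
    rw [APMrec.catalan_mul_Mapm, APMrec.catalan_mul_Mapm]
  rw [Finset.sum_congr rfl hs, APMrec.catalan_mul_Mapm, APMrec.catalan_mul_Mapm]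
  exact APMrec.S_rec lam m
end

section
/- Let Mₙ(λ) = E[e^{λ Lₙ}] under the uniform measure on 231-avoiding permutations of [n] (M₀ = 1), where Lₙ is the longest increasing subsequence length. Then for n ≥ 2, Cₙ·Mₙ(λ) = Σ_{j=1}^{n−1} C_{j−1}M_{j−1}(λ)·C_{n−j}M_{n−j}(λ) + e^λ·C_{n−1}M_{n−1}(λ). -/
open Equiv Filter Real Set

/-!
In a 231-avoiding permutation of `[n]`, every entry to the left of `n` is smaller than every
entry to its right. So if `n` stands at position `j`, the permutation is `τ n (ρ + (j - 1))`
with `τ`, `ρ` 231-avoiding of sizes `j - 1` and `n - j`, and every such concatenation avoids 231.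
An increasing subsequence can use `n` only as its last entry, so it cannot contain both `n` and
an entry of `ρ`; hence `L(σ) = L(τ) + max (L(ρ), 1)`, which equals `L(τ) + L(ρ)` unless `ρ` is
empty. Summing `e^{λ L}` over each class of permutations with `n` at the same position gives the
recursion.
-/

open Finset

namespace Perm231

section Patterns

variable {n k : ℕ}

def Is231At (σ : Perm (Fin n)) (i₁ i₂ i₃ : Fin n) : Prop :=
  i₁ < i₂ ∧ i₂ < i₃ ∧ σ i₃ < σ i₁ ∧ σ i₁ < σ i₂

theorem avoids231_iff (σ : Perm (Fin n)) : Avoids231 σ ↔ ∀ i₁ i₂ i₃, ¬ Is231At σ i₁ i₂ i₃ := by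
  simp only [Avoids231, Is231At, not_exists]

theorem lt_of_avoids231 {σ : Perm (Fin n)} (hσ : Avoids231 σ) {i j k : Fin n} (hij : i < j)
    (hjk : j < k) (hσij : σ i < σ j) : σ i < σ k := by
  refine lt_of_le_of_ne (not_lt.1 fun hki => (avoids231_iff σ).1 hσ i j k ⟨hij, hjk, hki, hσij⟩) ?_
  exact σ.injective.ne (hij.trans hjk).ne

end Patterns

section IncreasingSubsequences

variable {n : ℕ}

theorem bddAbove_lisLen_set (σ : Perm (Fin n)) :
    BddAbove {k | ∃ f : Fin k → Fin n, StrictMono f ∧ StrictMono (σ ∘ f)} :=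
  ⟨n, fun _ ⟨f, hf, _⟩ => by simpa using Fintype.card_le_of_injective f hf.injective⟩

theorem card_le_lisLen {σ : Perm (Fin n)} {s : Finset (Fin n)} (hs : StrictMonoOn σ s) :
    #s ≤ lisLen σ := by
  refine le_csSup (bddAbove_lisLen_set σ) ⟨s.orderEmbOfFin rfl, (s.orderEmbOfFin rfl).strictMono,
    fun i j hij => hs (s.orderEmbOfFin_mem rfl i) (s.orderEmbOfFin_mem rfl j) ?_⟩
  exact (s.orderEmbOfFin rfl).strictMono hij

theorem exists_strictMonoOn_card_eq_lisLen (σ : Perm (Fin n)) :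
    ∃ s : Finset (Fin n), StrictMonoOn σ s ∧ #s = lisLen σ := by
  obtain ⟨f, hf, hσf⟩ : lisLen σ ∈ {k | ∃ f : Fin k → Fin n, StrictMono f ∧ StrictMono (σ ∘ f)} :=
    Nat.sSup_mem ⟨0, finZeroElim, finZeroElim, finZeroElim⟩ (bddAbove_lisLen_set σ)
  refine ⟨univ.image f, ?_, by simp [card_image_of_injective _ hf.injective]⟩
  simp only [StrictMonoOn, coe_image, coe_univ, Set.image_univ, Set.forall_mem_range,
    hf.lt_iff_lt]
  exact fun _ _ h => hσf h

theorem lisLen_eq_zero (σ : Perm (Fin 0)) : lisLen σ = 0 := by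
  obtain ⟨s, -, hs⟩ := exists_strictMonoOn_card_eq_lisLen σ
  rw [← hs, Finset.card_eq_zero, Finset.eq_empty_iff_forall_notMem]
  exact fun i => i.elim0

theorem one_le_lisLen (σ : Perm (Fin (n + 1))) : 1 ≤ lisLen σ :=
  card_le_lisLen (s := {0}) (by simp)

theorem card_add_card_le_lisLen {σ : Perm (Fin n)} {s t : Finset (Fin n)} (hs : StrictMonoOn σ s)
    (ht : StrictMonoOn σ t) (hst : ∀ x ∈ s, ∀ y ∈ t, x < y ∧ σ x < σ y) :
    #s + #t ≤ lisLen σ := by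
  rw [← card_union_of_disjoint (disjoint_left.2 fun x hx hxt => (hst x hx x hxt).1.false)]
  refine card_le_lisLen ?_
  rw [coe_union]
  rintro x (hx | hx) y (hy | hy) hxy
  exacts [hs hx hy hxy, (hst x hx y hy).2, ((hst y hy x hx).1.asymm hxy).elim, ht hx hy hxy]

end IncreasingSubsequences

section PatternEmbedding

variable {n k : ℕ}

def IsPatternEmbedding (σ : Perm (Fin n)) (η : Perm (Fin k)) (f : Fin k → Fin n) : Prop :=
  StrictMono f ∧ ∀ i j, σ (f i) < σ (f j) ↔ η i < η j

namespace IsPatternEmbedding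

variable {σ : Perm (Fin n)} {η : Perm (Fin k)} {f : Fin k → Fin n}

theorem is231At_iff (hf : IsPatternEmbedding σ η f) (i₁ i₂ i₃ : Fin k) :
    Is231At σ (f i₁) (f i₂) (f i₃) ↔ Is231At η i₁ i₂ i₃ := by
  simp only [Is231At, hf.1.lt_iff_lt, hf.2]

theorem avoids231 (hf : IsPatternEmbedding σ η f) (hσ : Avoids231 σ) : Avoids231 η := by
  rw [avoids231_iff] at hσ ⊢
  exact fun i₁ i₂ i₃ h => hσ _ _ _ ((hf.is231At_iff i₁ i₂ i₃).2 h)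

theorem strictMonoOn_image_iff (hf : IsPatternEmbedding σ η f) (t : Set (Fin k)) :
    StrictMonoOn σ (f '' t) ↔ StrictMonoOn η t := by
  simp only [StrictMonoOn, Set.forall_mem_image, hf.1.lt_iff_lt, hf.2]

theorem card_le_lisLen_of_subset_range (hf : IsPatternEmbedding σ η f) {s : Finset (Fin n)}
    (hs : StrictMonoOn σ s) (hsf : ↑s ⊆ Set.range f) : #s ≤ lisLen η := by
  obtain ⟨t, -, rfl⟩ := subset_set_image_iff.1 (Set.image_univ (f := f) ▸ hsf)
  rw [card_image_of_injective _ hf.1.injective]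
  exact card_le_lisLen ((hf.strictMonoOn_image_iff t).1 (by simpa using hs))

end IsPatternEmbedding

end PatternEmbedding

section Glue

variable {a b : ℕ} (τ : Perm (Fin a)) (ρ : Perm (Fin b))

/-- The permutation whose one-line notation (0-indexed) is `τ`, then the maximum `a + b`, then `ρ`
shifted up by `a`. -/
def glueFun (i : Fin (a + b + 1)) : Fin (a + b + 1) :=
  if hi : (i : ℕ) < a then (Fin.castAdd b (τ ⟨i, hi⟩)).castSucc
  else if hi' : (i : ℕ) = a then Fin.last (a + b)
  else (Fin.natAdd a (ρ ⟨i - (a + 1), by have := i.isLt; omega⟩)).castSucc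

theorem glueFun_injective : Function.Injective (glueFun τ ρ) := by
  intro i j hij
  unfold glueFun at hij
  split_ifs at hij <;>
    simp only [Fin.ext_iff, Fin.val_last, Fin.val_castSucc, Fin.val_castAdd, Fin.val_natAdd]
      at hij <;>
    grind [Equiv.injective]

noncomputable def glue : Perm (Fin (a + b + 1)) :=
  .ofBijective _ (glueFun_injective τ ρ).bijective_of_finite

def leftPos {a : ℕ} (b : ℕ) : Fin a → Fin (a + b + 1) := Fin.castLE (by omega)

def rightPos (a : ℕ) {b : ℕ} (j : Fin b) : Fin (a + b + 1) := ⟨a + 1 + j, by omega⟩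

variable {τ ρ} {i : Fin (a + b + 1)}

theorem glue_val_of_lt (hi : (i : ℕ) < a) : (glue τ ρ i : ℕ) = τ ⟨i, hi⟩ := by
  simp [glue, glueFun, hi]

theorem glue_val_of_eq (hi : (i : ℕ) = a) : (glue τ ρ i : ℕ) = a + b := by
  simp [glue, glueFun, hi]

theorem glue_val_of_gt (hi : a < (i : ℕ)) :
    (glue τ ρ i : ℕ) = a + ρ ⟨i - (a + 1), by have := i.isLt; omega⟩ := by
  simp [glue, glueFun, hi.not_gt, hi.ne']

variable (τ ρ)

theorem glue_pivot : glue τ ρ ⟨a, by omega⟩ = Fin.last (a + b) :=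
  Fin.ext (glue_val_of_eq rfl)

theorem glue_val_lt_iff : (glue τ ρ i : ℕ) < a ↔ (i : ℕ) < a := by
  rcases lt_trichotomy (i : ℕ) a with hi | hi | hi
  · simp [glue_val_of_lt hi, hi]
  · simp [glue_val_of_eq hi, hi]
  · simp [glue_val_of_gt hi, hi.not_gt]

theorem glue_leftPos (i : Fin a) : glue τ ρ (leftPos b i) = leftPos b (τ i) :=
  Fin.ext (glue_val_of_lt (i := leftPos b i) i.isLt)

theorem strictMono_leftPos : StrictMono (leftPos (a := a) b) :=
  Fin.strictMono_castLE _

theorem isPatternEmbedding_glue_leftPos : IsPatternEmbedding (glue τ ρ) τ (leftPos b) :=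
  ⟨strictMono_leftPos, fun i j => by simp only [glue_leftPos, strictMono_leftPos.lt_iff_lt]⟩

theorem glue_rightPos (j : Fin b) : (glue τ ρ (rightPos a j) : ℕ) = a + ρ j := by
  rw [glue_val_of_gt (by simp only [rightPos]; omega)]
  simp only [rightPos, add_tsub_cancel_left, Fin.eta]

theorem strictMono_rightPos : StrictMono (rightPos a (b := b)) :=
  fun i j hij => by rw [Fin.lt_def] at hij ⊢; simp only [rightPos]; omega

theorem isPatternEmbedding_glue_rightPos : IsPatternEmbedding (glue τ ρ) ρ (rightPos a) :=
  ⟨strictMono_rightPos, fun i j => by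
    rw [Fin.lt_def, Fin.lt_def, glue_rightPos, glue_rightPos, Nat.add_lt_add_iff_left]⟩

theorem range_leftPos : Set.range (leftPos (a := a) b) = {i : Fin (a + b + 1) | (i : ℕ) < a} :=
  Fin.range_castLE _

theorem range_rightPos :
    Set.range (rightPos a (b := b)) = {i : Fin (a + b + 1) | a < (i : ℕ)} := by
  ext i
  simp only [Set.mem_range, Set.mem_ofPred_eq]
  refine ⟨?_, fun hi => ⟨⟨i - (a + 1), by have := i.isLt; omega⟩, Fin.ext ?_⟩⟩
  · rintro ⟨j, rfl⟩
    simp only [rightPos]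
    omega
  · simp only [rightPos]
    omega

theorem avoids231_glue_iff : Avoids231 (glue τ ρ) ↔ Avoids231 τ ∧ Avoids231 ρ := by
  refine ⟨fun h => ⟨(isPatternEmbedding_glue_leftPos τ ρ).avoids231 h,
    (isPatternEmbedding_glue_rightPos τ ρ).avoids231 h⟩, fun ⟨hτ, hρ⟩ => ?_⟩
  rw [avoids231_iff] at hτ hρ ⊢
  intro i₁ i₂ i₃ hpat
  obtain ⟨h12, h23, h31, h12'⟩ := id hpat
  rw [Fin.lt_def] at h12 h23 h31 h12'
  rcases lt_trichotomy (i₁ : ℕ) a with h1 | h1 | h1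
  · have h3 : (i₃ : ℕ) < a := (glue_val_lt_iff τ ρ).1 (h31.trans ((glue_val_lt_iff τ ρ).2 h1))
    have h2 : (i₂ : ℕ) < a := by omega
    obtain ⟨j₁, rfl⟩ : i₁ ∈ Set.range (leftPos b) := by rw [range_leftPos]; exact h1
    obtain ⟨j₂, rfl⟩ : i₂ ∈ Set.range (leftPos b) := by rw [range_leftPos]; exact h2
    obtain ⟨j₃, rfl⟩ : i₃ ∈ Set.range (leftPos b) := by rw [range_leftPos]; exact h3
    exact hτ j₁ j₂ j₃ (((isPatternEmbedding_glue_leftPos τ ρ).is231At_iff _ _ _).1 hpat)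
  · have := (glue τ ρ i₂).isLt
    rw [glue_val_of_eq h1] at h12'
    omega
  · obtain ⟨j₁, rfl⟩ : i₁ ∈ Set.range (rightPos a) := by rw [range_rightPos]; exact h1
    have h2 : a < (i₂ : ℕ) := by omega
    have h3 : a < (i₃ : ℕ) := by omega
    obtain ⟨j₂, rfl⟩ : i₂ ∈ Set.range (rightPos a) := by rw [range_rightPos]; exact h2
    obtain ⟨j₃, rfl⟩ : i₃ ∈ Set.range (rightPos a) := by rw [range_rightPos]; exact h3
    exact hρ j₁ j₂ j₃ (((isPatternEmbedding_glue_rightPos τ ρ).is231At_iff _ _ _).1 hpat)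

theorem lisLen_glue_le : lisLen (glue τ ρ) ≤ lisLen τ + max (lisLen ρ) 1 := by
  obtain ⟨s, hs, hcard⟩ := exists_strictMonoOn_card_eq_lisLen (glue τ ρ)
  rw [← hcard, ← card_filter_add_card_filter_not (s := s) (fun i => (i : ℕ) < a)]
  refine add_le_add ((isPatternEmbedding_glue_leftPos τ ρ).card_le_lisLen_of_subset_range
    (hs.mono (coe_subset.2 (filter_subset _ _)))
    (range_leftPos (b := b) ▸ fun i hi => (mem_filter.1 hi).2)) ?_
  by_cases hpiv : ⟨a, by omega⟩ ∈ s
  · -- nothing can follow the maximum in an increasing subsequence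
    refine (card_le_one.2 fun i hi j hj => ?_).trans (le_max_right _ _)
    have hmax : ∀ k ∈ s.filter (fun i : Fin (a + b + 1) => ¬ (i : ℕ) < a), (k : ℕ) = a := by
      intro k hk
      obtain ⟨hks, hka⟩ := mem_filter.1 hk
      by_contra hne
      have hlt : (⟨a, by omega⟩ : Fin (a + b + 1)) < k := Fin.lt_def.2 (by simp only; omega)
      have := hs hpiv hks hlt
      rw [Fin.lt_def, glue_val_of_eq rfl] at this
      have := (glue τ ρ k).isLt
      omega
    exact Fin.ext ((hmax i hi).trans (hmax j hj).symm)
  · refine ((isPatternEmbedding_glue_rightPos τ ρ).card_le_lisLen_of_subset_range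
      (hs.mono (coe_subset.2 (filter_subset _ _))) (range_rightPos (b := b) ▸ fun i hi => ?_)).trans
      (le_max_left _ _)
    obtain ⟨his, hia⟩ := mem_filter.1 hi
    have : (i : ℕ) ≠ a := fun h => hpiv ((Fin.ext h : i = ⟨a, by omega⟩) ▸ his)
    show a < (i : ℕ)
    omega

theorem le_lisLen_glue : lisLen τ + max (lisLen ρ) 1 ≤ lisLen (glue τ ρ) := by
  obtain ⟨sτ, hsτ, hτcard⟩ := exists_strictMonoOn_card_eq_lisLen τ
  obtain ⟨sρ, hsρ, hρcard⟩ := exists_strictMonoOn_card_eq_lisLen ρ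
  have hL : StrictMonoOn (glue τ ρ) ↑(sτ.image (leftPos b)) := by
    rw [coe_image, (isPatternEmbedding_glue_leftPos τ ρ).strictMonoOn_image_iff]
    exact hsτ
  have hR : StrictMonoOn (glue τ ρ) ↑(sρ.image (rightPos a)) := by
    rw [coe_image, (isPatternEmbedding_glue_rightPos τ ρ).strictMonoOn_image_iff]
    exact hsρ
  rw [← hτcard, ← card_image_of_injective sτ strictMono_leftPos.injective]
  rcases le_total (lisLen ρ) 1 with h | h
  · rw [max_eq_right h]
    refine card_add_card_le_lisLen (t := {⟨a, by omega⟩}) hL (by simp) fun x hx y hy => ?_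
    obtain ⟨i, -, rfl⟩ := mem_image.1 hx
    rw [mem_singleton.1 hy, Fin.lt_def, Fin.lt_def, glue_leftPos, glue_val_of_eq rfl]
    simp only [leftPos, Fin.val_castLE]
    omega
  · rw [max_eq_left h, ← hρcard, ← card_image_of_injective sρ strictMono_rightPos.injective]
    refine card_add_card_le_lisLen hL hR fun x hx y hy => ?_
    obtain ⟨i, -, rfl⟩ := mem_image.1 hx
    obtain ⟨j, -, rfl⟩ := mem_image.1 hy
    rw [Fin.lt_def, Fin.lt_def, glue_leftPos, glue_rightPos]
    simp only [leftPos, rightPos, Fin.val_castLE]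
    omega

theorem lisLen_glue : lisLen (glue τ ρ) = lisLen τ + max (lisLen ρ) 1 :=
  le_antisymm (lisLen_glue_le τ ρ) (le_lisLen_glue τ ρ)

end Glue

theorem glue_inj {a b : ℕ} {τ τ' : Perm (Fin a)} {ρ ρ' : Perm (Fin b)} :
    glue τ ρ = glue τ' ρ' ↔ τ = τ' ∧ ρ = ρ' := by
  refine ⟨fun h => ⟨Equiv.ext fun i => (strictMono_leftPos (b := b)).injective ?_,
    Equiv.ext fun j => Fin.ext (Nat.add_left_cancel (n := a) ?_)⟩, fun ⟨hτ, hρ⟩ => hτ ▸ hρ ▸ rfl⟩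
  · rw [← glue_leftPos, ← glue_leftPos, h]
  · rw [← glue_rightPos τ ρ, ← glue_rightPos τ' ρ', h]

section Decomposition

variable {a b : ℕ} {σ : Perm (Fin (a + b + 1))}

theorem lt_last_of_ne_pivot (hpiv : σ ⟨a, by omega⟩ = Fin.last (a + b)) {i : Fin (a + b + 1)}
    (hi : (i : ℕ) ≠ a) : σ i < Fin.last (a + b) := by
  rw [Fin.lt_last_iff_ne_last, ← hpiv]
  exact σ.injective.ne (Fin.ne_of_val_ne hi)

theorem lt_of_lt_pivot_lt (hσ : Avoids231 σ) (hpiv : σ ⟨a, by omega⟩ = Fin.last (a + b))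
    {i k : Fin (a + b + 1)} (hi : (i : ℕ) < a) (hk : a < (k : ℕ)) : σ i < σ k :=
  lt_of_avoids231 hσ (j := ⟨a, by omega⟩) (Fin.lt_def.2 hi) (Fin.lt_def.2 hk)
    (hpiv ▸ lt_last_of_ne_pivot hpiv hi.ne)

/-- Counting: `σ i` lies below the `b + 1` values of `σ` at positions `a, …, a + b`. -/
theorem val_lt_of_lt_pivot (hσ : Avoids231 σ) (hpiv : σ ⟨a, by omega⟩ = Fin.last (a + b))
    {i : Fin (a + b + 1)} (hi : (i : ℕ) < a) : (σ i : ℕ) < a := by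
  have hcard : #(Ici (⟨a, by omega⟩ : Fin (a + b + 1))) ≤ #(Ioi (σ i)) := by
    refine card_le_card_of_injOn σ (fun k hk => ?_) σ.injective.injOn
    rcases (mem_Ici.1 hk).eq_or_lt with rfl | hk
    · exact mem_coe.2 (Finset.mem_Ioi.2 (hpiv ▸ lt_last_of_ne_pivot hpiv hi.ne))
    · exact mem_coe.2 (Finset.mem_Ioi.2 (lt_of_lt_pivot_lt hσ hpiv hi hk))
  rw [Fin.card_Ici, Fin.card_Ioi] at hcard
  simp only at hcard
  omega

/-- Counting: `σ k` lies above the `a` values of `σ` at positions `0, …, a - 1`. -/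
theorem le_val_of_pivot_lt (hσ : Avoids231 σ) (hpiv : σ ⟨a, by omega⟩ = Fin.last (a + b))
    {k : Fin (a + b + 1)} (hk : a < (k : ℕ)) : a ≤ (σ k : ℕ) := by
  have hcard : #(Iio (⟨a, by omega⟩ : Fin (a + b + 1))) ≤ #(Iio (σ k)) :=
    card_le_card_of_injOn σ (fun i hi => mem_coe.2 (Finset.mem_Iio.2
      (lt_of_lt_pivot_lt hσ hpiv (Fin.lt_def.1 (Finset.mem_Iio.1 (mem_coe.1 hi))) hk)))
      σ.injective.injOn
  simpa only [Fin.card_Iio] using hcard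

theorem exists_glue_eq (hσ : Avoids231 σ) (hpiv : σ ⟨a, by omega⟩ = Fin.last (a + b)) :
    ∃ (τ : Perm (Fin a)) (ρ : Perm (Fin b)), glue τ ρ = σ := by
  have hleft (i : Fin a) : (σ (leftPos b i) : ℕ) < a := val_lt_of_lt_pivot hσ hpiv i.isLt
  have hright (j : Fin b) : a ≤ σ (rightPos a j) ∧ (σ (rightPos a j) : ℕ) < a + b := by
    have hj : a < (rightPos a j : ℕ) := by simp only [rightPos]; omega
    exact ⟨le_val_of_pivot_lt hσ hpiv hj, Fin.lt_def.1 (lt_last_of_ne_pivot hpiv hj.ne')⟩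
  let τ : Perm (Fin a) := .ofBijective (fun i => ⟨σ (leftPos b i), hleft i⟩) <|
    Function.Injective.bijective_of_finite fun i j h =>
      strictMono_leftPos.injective (σ.injective (Fin.ext (Fin.mk.inj h)))
  let ρ : Perm (Fin b) := .ofBijective
    (fun j => ⟨σ (rightPos a j) - a, by have := hright j; omega⟩) <|
    Function.Injective.bijective_of_finite fun i j h => by
      have := hright i; have := hright j
      exact strictMono_rightPos.injective (σ.injective (Fin.ext (by have := Fin.mk.inj h; omega)))
  refine ⟨τ, ρ, Equiv.ext fun i => Fin.ext ?_⟩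
  rcases lt_trichotomy (i : ℕ) a with h | h | h
  · rw [glue_val_of_lt h]
    rfl
  · rw [glue_val_of_eq h, show i = ⟨a, by omega⟩ from Fin.ext h, hpiv, Fin.val_last]
  · have hi : rightPos a ⟨i - (a + 1), by omega⟩ = i := Fin.ext (by simp only [rightPos]; omega)
    rw [glue_val_of_gt h]
    simp only [ρ, Equiv.ofBijective_apply, hi]
    have := hright ⟨i - (a + 1), by omega⟩
    rw [hi] at this
    omega

end Decomposition

section Sums

open scoped Classical in
noncomputable def avoiders (n : ℕ) : Finset (Perm (Fin n)) := univ.filter Avoids231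

noncomputable def lisSum (lam : ℝ) (n : ℕ) : ℝ := ∑ σ ∈ avoiders n, exp (lam * lisLen σ)

theorem catalan_mul_Minc (lam : ℝ) (n : ℕ) : (catalan n : ℝ) * Minc n lam = lisSum lam n := by
  have hC : (catalan n : ℝ) ≠ 0 := Nat.cast_ne_zero.2 (right_ne_zero_of_mul
    ((succ_mul_catalan_eq_centralBinom n).symm ▸ Nat.centralBinom_ne_zero n))
  rw [Minc, mul_div_cancel₀ _ hC]
  rfl

theorem image_glue_avoiders (a b : ℕ) :
    (avoiders a ×ˢ avoiders b).image (fun p => glue p.1 p.2) =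
      (avoiders (a + b + 1)).filter (fun σ => (σ.symm (Fin.last (a + b)) : ℕ) = a) := by
  ext σ
  simp only [avoiders, Finset.mem_image, Finset.mem_product, Finset.mem_filter, Finset.mem_univ,
    true_and, Prod.exists]
  constructor
  · rintro ⟨τ, ρ, hτρ, rfl⟩
    refine ⟨(avoids231_glue_iff τ ρ).2 hτρ, ?_⟩
    rw [← glue_pivot τ ρ, Equiv.symm_apply_apply]
  · rintro ⟨hσ, hpiv⟩
    obtain ⟨τ, ρ, rfl⟩ := exists_glue_eq hσ ((Equiv.symm_apply_eq σ).1 (Fin.ext hpiv)).symm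
    exact ⟨τ, ρ, (avoids231_glue_iff τ ρ).1 hσ, rfl⟩

theorem sum_avoiders_zero (f : Perm (Fin 0) → ℝ) : ∑ ρ ∈ avoiders 0, f ρ = f 1 := by
  classical
  rw [avoiders, filter_true_of_mem fun ρ _ ⟨i, _⟩ => i.elim0]
  simp

theorem sum_filter_symm_last_eq (lam : ℝ) {m a b : ℕ} (h : m = a + b) :
    ∑ σ ∈ (avoiders (m + 1)).filter (fun σ => (σ.symm (Fin.last m) : ℕ) = a),
      exp (lam * lisLen σ) = lisSum lam a * (if b = 0 then exp lam else lisSum lam b) := by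
  subst h
  rw [← image_glue_avoiders, sum_image fun p _ q _ hpq => Prod.ext_iff.2 (glue_inj.1 hpq),
    sum_product, lisSum, sum_mul]
  refine sum_congr rfl fun τ _ => ?_
  simp only [lisLen_glue, Nat.cast_add, mul_add, exp_add, ← mul_sum]
  congr 1
  rcases b with _ | b
  · rw [if_pos rfl, sum_avoiders_zero, lisLen_eq_zero]
    simp
  · rw [if_neg b.succ_ne_zero, lisSum]
    refine sum_congr rfl fun ρ _ => ?_
    rw [max_eq_left (one_le_lisLen ρ)]

theorem lisSum_succ (lam : ℝ) (m : ℕ) :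
    lisSum lam (m + 1) =
      ∑ p ∈ range m, lisSum lam p * lisSum lam (m - p) + exp lam * lisSum lam m := by
  rw [lisSum, ← sum_fiberwise_of_maps_to (g := fun σ => (σ.symm (Fin.last m) : ℕ))
    (t := range (m + 1)) fun σ _ => mem_range.2 (σ.symm _).isLt, sum_range_succ,
    sum_filter_symm_last_eq lam (add_tsub_cancel_of_le le_rfl).symm, Nat.sub_self, if_pos rfl,
    mul_comm]
  refine congrArg (· + _) (sum_congr rfl fun p hp => ?_)
  have hp : p < m := mem_range.1 hp
  rw [sum_filter_symm_last_eq lam (by omega : m = p + (m - p)), if_neg (by omega)]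

end Sums

end Perm231

/-- The recursion for the moment generating function of `Lₙ` under the uniform 231-avoiding
measure: `Cₙ Mₙ(λ) = Σ_{j=1}^{n-1} C_{j-1}M_{j-1}(λ) C_{n-j}M_{n-j}(λ) + e^λ C_{n-1}M_{n-1}(λ)`. -/
theorem catalan_minc_recursion (lam : ℝ) (n : ℕ) (hn : 2 ≤ n) :
    (catalan n : ℝ) * Minc n lam =
      (∑ j ∈ Finset.Icc 1 (n - 1),
        ((catalan (j - 1) : ℝ) * Minc (j - 1) lam) * ((catalan (n - j) : ℝ) * Minc (n - j) lam))
      + Real.exp lam * ((catalan (n - 1) : ℝ) * Minc (n - 1) lam) := by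
  obtain ⟨m, rfl⟩ : ∃ m, n = m + 1 := ⟨n - 1, by omega⟩
  simp only [Perm231.catalan_mul_Minc, Perm231.lisSum_succ, Nat.add_sub_cancel]
  rw [← Finset.Ico_add_one_right_eq_Icc, sum_Ico_eq_sum_range, Nat.add_sub_cancel]
  refine congrArg (· + _) (sum_congr rfl fun p hp => ?_)
  rw [add_tsub_cancel_left, show m + 1 - (1 + p) = m - p by omega]
end
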